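/- arXiv:0904.2452 — 10 statements merged into one kernel-verified Lean document; each statement's English description precedes it below -/
import Mathlib

section
/- Let u1, u2 be formal power series with complex coefficients and v1, v2 be formal power series with nonnegative real coefficients such that u1 ⪯ v1 and u2 ⪯ v2, and assume the constant terms of u1 and v1 are zero. Then the formal composition satisfies u2 ∘ u1 ⪯ v2 ∘ v1. -/
/-- `v` is a majorant series of `u`: all coefficients of `v` are nonnegative and
`|u_n| ≤ v_n` for every `n`. -/
def Majorizes (u : PowerSeries ℂ) (v : PowerSeries ℝ) : Prop :=
  ∀ n : ℕ, 0 ≤ PowerSeries.coeff n v ∧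
    ‖PowerSeries.coeff n u‖ ≤ PowerSeries.coeff n v

/-- Formal composition `f ∘ g` of power series (meaningful when the inner series `g`
has zero constant term, in which case `coeff n (g ^ k) = 0` for `k > n`). -/
noncomputable def PowerSeriesComp {R : Type*} [CommSemiring R]
    (f g : PowerSeries R) : PowerSeries R :=
  PowerSeries.mk fun n =>
    ∑ k ∈ Finset.range (n + 1), PowerSeries.coeff k f * PowerSeries.coeff n (g ^ k)

/-!
Majorization is preserved by products, hence by powers, because the coefficients of a product
are sums of products of coefficients. The `n`-th coefficient of `u2 ∘ u1` is again such a sum,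
of products of coefficients of `u2` and of `u1 ^ k`, so the bound passes term by term.
-/

theorem norm_sum_mul_le_and_nonneg {ι R : Type*} [SeminormedRing R] (s : Finset ι)
    {a b : ι → R} {A B : ι → ℝ} (ha : ∀ i, 0 ≤ A i ∧ ‖a i‖ ≤ A i)
    (hb : ∀ i, 0 ≤ B i ∧ ‖b i‖ ≤ B i) :
    0 ≤ ∑ i ∈ s, A i * B i ∧ ‖∑ i ∈ s, a i * b i‖ ≤ ∑ i ∈ s, A i * B i := by
  refine ⟨Finset.sum_nonneg fun i _ => mul_nonneg (ha i).1 (hb i).1, ?_⟩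
  calc ‖∑ i ∈ s, a i * b i‖ ≤ ∑ i ∈ s, ‖a i‖ * ‖b i‖ :=
        norm_sum_le_of_le s fun i _ => norm_mul_le _ _
    _ ≤ ∑ i ∈ s, A i * B i :=
        Finset.sum_le_sum fun i _ => mul_le_mul (ha i).2 (hb i).2 (norm_nonneg _) (ha i).1

theorem Majorizes.one : Majorizes 1 1 := by
  intro n
  rw [PowerSeries.coeff_one, PowerSeries.coeff_one]
  split_ifs <;> simp

theorem Majorizes.mul {u u' : PowerSeries ℂ} {v v' : PowerSeries ℝ}
    (h : Majorizes u v) (h' : Majorizes u' v') : Majorizes (u * u') (v * v') := by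
  intro n
  simp only [PowerSeries.coeff_mul]
  exact norm_sum_mul_le_and_nonneg _ (fun p => h p.1) (fun p => h' p.2)

theorem Majorizes.pow {u : PowerSeries ℂ} {v : PowerSeries ℝ}
    (h : Majorizes u v) : ∀ k : ℕ, Majorizes (u ^ k) (v ^ k)
  | 0 => by simpa using Majorizes.one
  | k + 1 => by simpa only [pow_succ] using (h.pow k).mul h

theorem majorant_comp_general (u1 u2 : PowerSeries ℂ) (v1 v2 : PowerSeries ℝ)
    (h1 : Majorizes u1 v1) (h2 : Majorizes u2 v2) :
    Majorizes (PowerSeriesComp u2 u1) (PowerSeriesComp v2 v1) := by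
  intro n
  simp only [PowerSeriesComp, PowerSeries.coeff_mk]
  exact norm_sum_mul_le_and_nonneg _ h2 fun k => h1.pow k n

theorem majorant_comp (u1 u2 : PowerSeries ℂ) (v1 v2 : PowerSeries ℝ)
    (h1 : Majorizes u1 v1) (h2 : Majorizes u2 v2)
    (hu0 : PowerSeries.constantCoeff u1 = 0)
    (hv0 : PowerSeries.constantCoeff v1 = 0) :
    Majorizes (PowerSeriesComp u2 u1) (PowerSeriesComp v2 v1) :=
  majorant_comp_general u1 u2 v1 v2 h1 h2
end

section
/- Let r ≥ 1 be an integer. For each k with 0 ≤ k < r, let a_k ∈ ℂ[[z]] and b_k ∈ ℝ[[z]] be formal power series with a_k ⪯ b_k. Let u ∈ ℂ[[z]] and v ∈ ℝ[[z]] satisfy the formal linear differential equations u^{(r)} = Σ_{k=0}^{r−1} a_k·u^{(k)} and v^{(r)} = Σ_{k=0}^{r−1} b_k·v^{(k)} (where ^{(k)} denotes the k-th formal derivative), and assume |u_k| ≤ v_k for 0 ≤ k < r (i.e., the first r coefficients of u are dominated in modulus by those of v). Then u ⪯ v. -/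
/-!
Comparing the coefficients of `z^m` in the two equations writes `(m+1)⋯(m+r) u_{m+r}` and
`(m+1)⋯(m+r) v_{m+r}` as one polynomial with nonnegative integer coefficients, evaluated at the
coefficients of the `a_k` and the `u_j` with `j < m + r`, resp. of the `b_k` and the `v_j`.
Majorants are preserved by products and derivatives, so strong induction gives `|u_n| ≤ v_n`.
-/

section

open PowerSeries

theorem norm_coeff_mul_le {R : Type*} [SeminormedRing R] {f f' : R⟦X⟧} {g g' : ℝ⟦X⟧} {n : ℕ}
    (hf : ∀ i ≤ n, ‖coeff i f‖ ≤ coeff i g) (hf' : ∀ i ≤ n, ‖coeff i f'‖ ≤ coeff i g') :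
    ‖coeff n (f * f')‖ ≤ coeff n (g * g') := by
  rw [coeff_mul, coeff_mul]
  refine (norm_sum_le _ _).trans (Finset.sum_le_sum fun p hp => ?_)
  have h₁ := hf p.1 (Finset.HasAntidiagonal.antidiagonal.fst_le hp)
  have h₂ := hf' p.2 (Finset.HasAntidiagonal.antidiagonal.snd_le hp)
  exact (norm_mul_le _ _).trans
    (mul_le_mul h₁ h₂ (norm_nonneg _) ((norm_nonneg _).trans h₁))

theorem norm_coeff_iterate_derivative_le {R : Type*} [SeminormedCommRing R] {f : R⟦X⟧}
    {g : ℝ⟦X⟧} {k i : ℕ} (h : ‖coeff (i + k) f‖ ≤ coeff (i + k) g) :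
    ‖coeff i ((d⁄dX R)^[k] f)‖ ≤ coeff i ((d⁄dX ℝ)^[k] g) := by
  rw [coeff_iterate_derivative, coeff_iterate_derivative, ← nsmul_eq_mul]
  exact norm_nsmul_le.trans (by gcongr)

theorem norm_coeff_add_le_of_diffeq {𝕜 : Type*} [RCLike 𝕜] {r m : ℕ}
    {a : ℕ → 𝕜⟦X⟧} {b : ℕ → ℝ⟦X⟧} (hab : ∀ k < r, ∀ i, ‖coeff i (a k)‖ ≤ coeff i (b k))
    {u : 𝕜⟦X⟧} {v : ℝ⟦X⟧}
    (hu : (d⁄dX 𝕜)^[r] u = ∑ k ∈ Finset.range r, a k * (d⁄dX 𝕜)^[k] u)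
    (hv : (d⁄dX ℝ)^[r] v = ∑ k ∈ Finset.range r, b k * (d⁄dX ℝ)^[k] v)
    (hlt : ∀ n < m + r, ‖coeff n u‖ ≤ coeff n v) :
    ‖coeff (m + r) u‖ ≤ coeff (m + r) v := by
  have hderiv : ‖coeff m ((d⁄dX 𝕜)^[r] u)‖ ≤ coeff m ((d⁄dX ℝ)^[r] v) := by
    rw [hu, hv, map_sum, map_sum]
    refine (norm_sum_le _ _).trans (Finset.sum_le_sum fun k hk => ?_)
    have hk := Finset.mem_range.mp hk
    exact norm_coeff_mul_le (fun i _ => hab k hk i)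
      (fun i hi => norm_coeff_iterate_derivative_le (hlt _ (by omega)))
  rw [coeff_iterate_derivative, coeff_iterate_derivative, norm_mul, RCLike.norm_natCast]
    at hderiv
  exact le_of_mul_le_mul_left hderiv (by positivity [Nat.ascFactorial_pos (m + 1) r])

end

theorem majorant_of_diffeq_general (r : ℕ)
    (a : ℕ → PowerSeries ℂ) (b : ℕ → PowerSeries ℝ)
    (hab : ∀ k < r, Majorizes (a k) (b k))
    (u : PowerSeries ℂ) (v : PowerSeries ℝ)
    (hu : (⇑(PowerSeries.derivative ℂ))^[r] u =
      ∑ k ∈ Finset.range r, a k * (⇑(PowerSeries.derivative ℂ))^[k] u)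
    (hv : (⇑(PowerSeries.derivative ℝ))^[r] v =
      ∑ k ∈ Finset.range r, b k * (⇑(PowerSeries.derivative ℝ))^[k] v)
    (hinit : ∀ k < r, ‖PowerSeries.coeff k u‖ ≤ PowerSeries.coeff k v) :
    Majorizes u v := by
  have hle : ∀ n, ‖PowerSeries.coeff n u‖ ≤ PowerSeries.coeff n v := by
    intro n
    induction n using Nat.strong_induction_on with
    | _ n ih =>
      by_cases hn : n < r
      · exact hinit n hn
      · obtain ⟨m, rfl⟩ : ∃ m, n = m + r := ⟨n - r, by omega⟩
        exact norm_coeff_add_le_of_diffeq (fun k hk i => (hab k hk i).2) hu hv ih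
  exact fun n => ⟨(norm_nonneg _).trans (hle n), hle n⟩

theorem majorant_of_diffeq (r : ℕ) (hr : 1 ≤ r)
    (a : ℕ → PowerSeries ℂ) (b : ℕ → PowerSeries ℝ)
    (hab : ∀ k < r, Majorizes (a k) (b k))
    (u : PowerSeries ℂ) (v : PowerSeries ℝ)
    (hu : (⇑(PowerSeries.derivative ℂ))^[r] u =
      ∑ k ∈ Finset.range r, a k * (⇑(PowerSeries.derivative ℂ))^[k] u)
    (hv : (⇑(PowerSeries.derivative ℝ))^[r] v =
      ∑ k ∈ Finset.range r, b k * (⇑(PowerSeries.derivative ℝ))^[k] v)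
    (hinit : ∀ k < r, ‖PowerSeries.coeff k u‖ ≤ PowerSeries.coeff k v) :
    Majorizes u v :=
  majorant_of_diffeq_general r a b hab u v hu hv hinit
end

section
/- Let N, D ∈ ℂ[z] be polynomials with D(0) ≠ 0, and let (r_n) denote the coefficient sequence of the power series expansion of the rational function N/D at the origin. Let ρ > 0 be a real number such that every complex root ζ of D satisfies |ζ| ≥ ρ, and let m ≥ 1 be an integer such that every root of D of modulus exactly ρ has multiplicity at most m. Then there exists a real constant M ≥ 0 such that |r_n| ≤ M · C(n+m−1, m−1) · ρ^{−n} for all n ∈ ℕ; equivalently, N/D ⪯ M·(1 − z/ρ)^{−m}. -/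
/-!
Partial fractions, one root at a time. If `ζ` is a root of `D` of multiplicity `μ`, write
`D = (X - ζ) ^ μ * E` with `E(ζ) ≠ 0`; for `A = N(ζ) / E(ζ)` the polynomial `N - A E` is divisible
by `X - ζ`, so `N / D = A / (X - ζ) ^ μ + N₁ / D₁` with `D = (X - ζ) * D₁`. The coefficients of
`1 / (X - ζ) ^ μ` have modulus `|ζ|⁻¹ ^ μ * C(n + μ - 1, μ - 1) * |ζ|⁻¹ ^ n`: on the circle `|ζ| = ρ`
this is `O(C(n + m - 1, m - 1) ρ⁻ⁿ)` because `μ ≤ m`, and outside it because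
`∑ C(n + μ - 1, μ - 1) (ρ / |ζ|) ^ n` converges. The induction on the degree runs over the divisors
of `D`, whose roots and multiplicities are controlled by those of `D`.
-/

open Polynomial Asymptotics Filter

theorem Nat.add_choose_le_add_choose {n j k : ℕ} (h : j ≤ k) :
    (n + j).choose j ≤ (n + k).choose k := by
  rw [← Nat.choose_symm_add, ← Nat.choose_symm_add]
  exact Nat.choose_le_choose n (by omega)

theorem constantCoeff_coe_ne_zero {K : Type*} [Field K] {p : K[X]} (hp : p.eval 0 ≠ 0) :
    PowerSeries.constantCoeff (p : PowerSeries K) ≠ 0 := by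
  rwa [constantCoeff_coe, coeff_zero_eq_eval_zero]

theorem inv_coe_X_sub_C_pow {K : Type*} [Field K] {ζ : K} (hζ : ζ ≠ 0) (k : ℕ) :
    (((X - C ζ) ^ (k + 1) : K[X]) : PowerSeries K)⁻¹ =
      PowerSeries.C ((-ζ)⁻¹ ^ (k + 1)) *
        PowerSeries.rescale ζ⁻¹ (PowerSeries.mk fun n => ((k + n).choose k : K)) := by
  have hlin : ((X - C ζ : K[X]) : PowerSeries K) =
      PowerSeries.C (-ζ) * PowerSeries.rescale ζ⁻¹ (1 - PowerSeries.X) := by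
    rw [map_sub, map_one, PowerSeries.rescale_X, coe_sub, coe_X, coe_C, mul_sub, mul_one,
      ← mul_assoc, ← map_mul, neg_mul, mul_inv_cancel₀ hζ]
    simp only [map_neg, map_one]
    ring
  rw [PowerSeries.inv_eq_iff_mul_eq_one, coe_pow, hlin, mul_pow, ← map_pow, ← map_pow]
  · calc _ = PowerSeries.C ((-ζ)⁻¹ ^ (k + 1) * (-ζ) ^ (k + 1)) * PowerSeries.rescale ζ⁻¹
          ((PowerSeries.mk fun n => ((k + n).choose k : K)) * (1 - PowerSeries.X) ^ (k + 1)) := by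
          simp only [map_mul]; ring
      _ = 1 := by
          rw [PowerSeries.mk_add_choose_mul_one_sub_pow_eq_one, ← mul_pow,
            inv_mul_cancel₀ (neg_ne_zero.mpr hζ), one_pow, map_one, map_one, one_mul]
  · exact constantCoeff_coe_ne_zero (by simp [hζ])

theorem norm_coeff_inv_coe_X_sub_C_pow {ζ : ℂ} (hζ : ζ ≠ 0) (k n : ℕ) :
    ‖PowerSeries.coeff n (((X - C ζ) ^ (k + 1) : ℂ[X]) : PowerSeries ℂ)⁻¹‖ =
      ‖ζ‖⁻¹ ^ (k + 1) * ((k + n).choose k * ‖ζ‖⁻¹ ^ n) := by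
  rw [inv_coe_X_sub_C_pow hζ, PowerSeries.coeff_C_mul, PowerSeries.coeff_rescale,
    PowerSeries.coeff_mk]
  simp only [norm_mul, norm_pow, norm_inv, norm_neg, Complex.norm_natCast]
  ring

-- The coefficient of `z ^ n` in `(1 - z / ρ) ^ (-m)`, provided `m ≥ 1`.
noncomputable def majorantCoeff (ρ : ℝ) (m n : ℕ) : ℝ :=
  ((n + m - 1).choose (m - 1) : ℝ) / ρ ^ n

theorem majorantCoeff_pos {ρ : ℝ} (hρ : 0 < ρ) (m n : ℕ) : 0 < majorantCoeff ρ m n := by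
  unfold majorantCoeff
  have : 0 < (n + m - 1).choose (m - 1) := Nat.choose_pos (by omega)
  positivity

theorem isBigO_inv_pow_majorantCoeff {ρ : ℝ} (hρ : 0 < ρ) (m : ℕ) :
    (fun n => (ρ ^ n)⁻¹) =O[atTop] majorantCoeff ρ m := by
  refine IsBigO.of_bound 1 (Eventually.of_forall fun n => ?_)
  have hchoose : (1 : ℝ) ≤ (n + m - 1).choose (m - 1) := by
    exact_mod_cast Nat.choose_pos (by omega)
  rw [Real.norm_of_nonneg (by positivity), Real.norm_of_nonneg (majorantCoeff_pos hρ m n).le,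
    one_mul, majorantCoeff, div_eq_mul_inv]
  exact le_mul_of_one_le_left (by positivity) hchoose

theorem isBigO_choose_mul_inv_pow_majorantCoeff {ρ r : ℝ} (hρ : 0 < ρ) (hρr : ρ ≤ r) {k m : ℕ}
    (hk : r = ρ → k + 1 ≤ m) :
    (fun n => ((k + n).choose k : ℝ) * r⁻¹ ^ n) =O[atTop] majorantCoeff ρ m := by
  rcases hρr.eq_or_lt with rfl | hlt
  · have hkm := hk rfl
    refine IsBigO.of_bound 1 (Eventually.of_forall fun n => ?_)
    have hchoose : (k + n).choose k ≤ (n + m - 1).choose (m - 1) := by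
      rw [add_comm k n, show n + m - 1 = n + (m - 1) by omega]
      exact Nat.add_choose_le_add_choose (by omega)
    rw [Real.norm_of_nonneg (by positivity),
      Real.norm_of_nonneg (majorantCoeff_pos hρ m n).le, one_mul, majorantCoeff,
      div_eq_mul_inv, inv_pow]
    gcongr
  · have hq : ‖ρ / r‖ < 1 := by
      rw [Real.norm_of_nonneg (div_pos hρ (hρ.trans hlt)).le, div_lt_one (hρ.trans hlt)]
      exact hlt
    have hbounded :
        (fun n => ((n + k).choose k : ℝ) * (ρ / r) ^ n) =O[atTop] (fun _ => (1 : ℝ)) :=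
      (summable_choose_mul_geometric_of_norm_lt_one k hq).tendsto_atTop_zero.isBigO_one ℝ
    refine (hbounded.mul (isBigO_inv_pow_majorantCoeff hρ m)).congr (fun n => ?_)
      (fun n => one_mul _)
    rw [add_comm n k, div_pow, inv_pow]
    field_simp

theorem isBigO_coeff_coe {R F : Type*} [NormedRing R] [Norm F] (p : R[X]) (g : ℕ → F) :
    (fun n => PowerSeries.coeff n (p : PowerSeries R)) =O[atTop] g := by
  refine (isBigO_zero g atTop).congr' ?_ EventuallyEq.rfl
  filter_upwards [eventually_gt_atTop p.natDegree] with n hn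
  rw [coeff_coe, coeff_eq_zero_of_natDegree_lt hn]

theorem isBigO_coeff_inv_coe_X_sub_C_pow {ρ : ℝ} (hρ : 0 < ρ) {ζ : ℂ} (hζ : ρ ≤ ‖ζ‖) {k m : ℕ}
    (hk : ‖ζ‖ = ρ → k + 1 ≤ m) :
    (fun n => PowerSeries.coeff n (((X - C ζ) ^ (k + 1) : ℂ[X]) : PowerSeries ℂ)⁻¹)
      =O[atTop] majorantCoeff ρ m := by
  have hζ0 : ζ ≠ 0 := norm_pos_iff.mp (hρ.trans_le hζ)
  refine IsBigO.trans ?_ (isBigO_choose_mul_inv_pow_majorantCoeff hρ hζ hk)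
  refine IsBigO.of_bound (‖ζ‖⁻¹ ^ (k + 1)) (Eventually.of_forall fun n => ?_)
  rw [norm_coeff_inv_coe_X_sub_C_pow hζ0, Real.norm_of_nonneg (by positivity)]

theorem exists_coe_mul_inv_eq_add {K : Type*} [Field K] {ζ : K} (hζ : ζ ≠ 0) {E : K[X]}
    (hE0 : E.eval 0 ≠ 0) (hEζ : E.eval ζ ≠ 0) (k : ℕ) (N : K[X]) :
    ∃ (A : K) (N₁ : K[X]),
      (N : PowerSeries K) * (((X - C ζ) ^ (k + 1) * E : K[X]) : PowerSeries K)⁻¹ =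
        PowerSeries.C A * (((X - C ζ) ^ (k + 1) : K[X]) : PowerSeries K)⁻¹ +
          N₁ * (((X - C ζ) ^ k * E : K[X]) : PowerSeries K)⁻¹ := by
  set A := N.eval ζ / E.eval ζ
  obtain ⟨N₁, hN₁⟩ : X - C ζ ∣ N - C A * E := by
    rw [dvd_iff_isRoot, IsRoot, eval_sub, eval_mul, eval_C, div_mul_cancel₀ _ hEζ, sub_self]
  refine ⟨A, N₁, ((PowerSeries.eq_mul_inv_iff_mul_eq ?_).mpr ?_).symm⟩
  · exact constantCoeff_coe_ne_zero (by simp [eval_mul, hζ, hE0])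
  have hL : PowerSeries.constantCoeff (((X - C ζ) ^ (k + 1) : K[X]) : PowerSeries K) ≠ 0 :=
    constantCoeff_coe_ne_zero (by simp [hζ])
  have hD₁ : PowerSeries.constantCoeff (((X - C ζ) ^ k * E : K[X]) : PowerSeries K) ≠ 0 :=
    constantCoeff_coe_ne_zero (by simp [eval_mul, hζ, hE0])
  have hN :
      (N : PowerSeries K) = PowerSeries.C A * E + ((X - C ζ : K[X]) : PowerSeries K) * N₁ := by
    rw [← coe_C, ← coe_mul, ← coe_mul, ← coe_add, ← hN₁, add_sub_cancel]
  have hLinv := PowerSeries.inv_mul_cancel _ hL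
  have hD₁inv := PowerSeries.inv_mul_cancel _ hD₁
  push_cast at hN hLinv hD₁inv ⊢
  linear_combination (PowerSeries.C A * (E : PowerSeries K)) * hLinv +
    ((N₁ : PowerSeries K) * (PowerSeries.X - PowerSeries.C ζ)) * hD₁inv - hN

theorem isBigO_coeff_mul_inv_of_dvd {ρ : ℝ} (hρ : 0 < ρ) {m : ℕ} {D₀ : ℂ[X]}
    (hD₀ : D₀.eval 0 ≠ 0) (hroots : ∀ ζ : ℂ, D₀.IsRoot ζ → ρ ≤ ‖ζ‖)
    (hmult : ∀ ζ : ℂ, D₀.IsRoot ζ → ‖ζ‖ = ρ → D₀.rootMultiplicity ζ ≤ m)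
    {D : ℂ[X]} (hD : D ∣ D₀) (N : ℂ[X]) :
    (fun n => PowerSeries.coeff n ((N : PowerSeries ℂ) * (D : PowerSeries ℂ)⁻¹))
      =O[atTop] majorantCoeff ρ m := by
  induction hdeg : D.natDegree generalizing D N with
  | zero =>
    rw [eq_C_of_natDegree_eq_zero hdeg, coe_C, PowerSeries.C_inv, ← coe_C, ← coe_mul]
    exact isBigO_coeff_coe _ _
  | succ d ih =>
    have hD₀ne : D₀ ≠ 0 := by rintro rfl; simp at hD₀
    have hDne : D ≠ 0 := ne_zero_of_dvd_ne_zero hD₀ne hD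
    obtain ⟨ζ, hζ⟩ :=
      Complex.exists_root (natDegree_pos_iff_degree_pos.mp (by rw [hdeg]; exact d.succ_pos))
    have hζ₀ : D₀.IsRoot ζ := hζ.dvd hD
    have hζ0 : ζ ≠ 0 := by rintro rfl; exact hD₀ hζ₀
    obtain ⟨k, hk⟩ : ∃ k, D.rootMultiplicity ζ = k + 1 :=
      Nat.exists_eq_succ_of_ne_zero ((rootMultiplicity_pos hDne).mpr hζ).ne'
    obtain ⟨E, hDE, hndvd⟩ := exists_eq_pow_rootMultiplicity_mul_and_not_dvd D hDne ζ
    rw [hk, eq_comm] at hDE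
    have hEζ : E.eval ζ ≠ 0 := mt dvd_iff_isRoot.mpr hndvd
    have hD₁D : (X - C ζ) ^ k * E ∣ D := ⟨X - C ζ, by rw [← hDE]; ring⟩
    have hE0 : E.eval 0 ≠ 0 := fun h =>
      hD₀ (eval_eq_zero_of_dvd_of_eval_eq_zero ((dvd_mul_left E _).trans (hD₁D.trans hD)) h)
    have hdeg₁ : ((X - C ζ) ^ k * E).natDegree = d := by
      have := natDegree_mul (X_sub_C_ne_zero ζ) (ne_zero_of_dvd_ne_zero hDne hD₁D)
      rw [← mul_assoc, ← pow_succ', hDE, hdeg, natDegree_X_sub_C] at this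
      omega
    obtain ⟨A, N₁, hsplit⟩ := exists_coe_mul_inv_eq_add hζ0 hE0 hEζ k N
    rw [← hDE, hsplit]
    simp only [map_add, PowerSeries.coeff_C_mul]
    refine IsBigO.add (IsBigO.const_mul_left ?_ A) (ih (hD₁D.trans hD) N₁ hdeg₁)
    exact isBigO_coeff_inv_coe_X_sub_C_pow hρ (hroots ζ hζ₀) fun h =>
      hk ▸ (rootMultiplicity_le_rootMultiplicity_of_dvd hD₀ne hD ζ).trans (hmult ζ hζ₀ h)

theorem ratfun_coeff_bound_general (N D : Polynomial ℂ) (hD0 : D.eval 0 ≠ 0)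
    (ρ : ℝ) (hρ : 0 < ρ) (m : ℕ)
    (hroots : ∀ ζ : ℂ, D.IsRoot ζ → ρ ≤ ‖ζ‖)
    (hmult : ∀ ζ : ℂ, D.IsRoot ζ → ‖ζ‖ = ρ → D.rootMultiplicity ζ ≤ m) :
    ∃ M : ℝ, 0 ≤ M ∧ ∀ n : ℕ,
      ‖PowerSeries.coeff n ((N : PowerSeries ℂ) * (D : PowerSeries ℂ)⁻¹)‖ ≤
        M * ((n + m - 1).choose (m - 1)) / ρ ^ n := by
  obtain ⟨M, hM0, hM⟩ :=
    bound_of_isBigO_nat_atTop (isBigO_coeff_mul_inv_of_dvd hρ hD0 hroots hmult dvd_rfl N)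
  refine ⟨M, hM0.le, fun n => ?_⟩
  have hw := majorantCoeff_pos hρ m n
  rw [mul_div_assoc, ← majorantCoeff, ← Real.norm_of_nonneg hw.le]
  exact hM hw.ne'

theorem ratfun_coeff_bound (N D : Polynomial ℂ) (hD0 : D.eval 0 ≠ 0)
    (ρ : ℝ) (hρ : 0 < ρ) (m : ℕ) (hm : 1 ≤ m)
    (hroots : ∀ ζ : ℂ, D.IsRoot ζ → ρ ≤ ‖ζ‖)
    (hmult : ∀ ζ : ℂ, D.IsRoot ζ → ‖ζ‖ = ρ → D.rootMultiplicity ζ ≤ m) :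
    ∃ M : ℝ, 0 ≤ M ∧ ∀ n : ℕ,
      ‖PowerSeries.coeff n ((N : PowerSeries ℂ) * (D : PowerSeries ℂ)⁻¹)‖ ≤
        M * ((n + m - 1).choose (m - 1)) / ρ ^ n :=
  ratfun_coeff_bound_general N D hD0 ρ hρ m hroots hmult
end

section
/- Let N, D ∈ ℂ[z] be polynomials with D(0) ≠ 0, and let (r_n) denote the coefficient sequence of the power series expansion of N/D at the origin. Then there exist complex numbers h_{ζ,d}, indexed by the roots ζ of D and the integers d with 1 ≤ d ≤ mult_D(ζ) (the multiplicity of ζ as a root of D), such that for all integers n ≥ max(0, deg N − deg D + 1): r_n = Σ_{ζ : D(ζ)=0} Σ_{d=1}^{mult_D(ζ)} h_{ζ,d} · (n+1)^{rising(d−1)} · ζ^{−n}. -/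
/-- The rising factorial `x (x+1) ⋯ (x+k-1)`, with `x^{rising 0} = 1`. -/
noncomputable def risingFactorialC (x : ℂ) (k : ℕ) : ℂ :=
  ∏ i ∈ Finset.range k, (x + i)

/-!
Over `ℂ` the denominator factors as `D = c P` with `P = ∏ (X - ζ)^{m_ζ}`. Partial fractions write
`N / D = c⁻¹ (Q + ∑_ζ ∑_{d=1}^{m_ζ} a_{ζ,d} / (X - ζ)^d)` with `Q = N /ₘ P`, so
`deg Q = deg N - deg D` and `Q` contributes nothing to the coefficients past that degree.
Each `(X - ζ)^{-d} = (-ζ)^{-d} (1 - X/ζ)^{-d}` expands as `(-ζ⁻¹)^d ∑_n C(d-1+n, d-1) ζ^{-n} X^n`,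
and `(d-1)! C(d-1+n, d-1) = (n+1)^{rising(d-1)}`.
-/

open Polynomial Finset
open scoped Nat

theorem sum_Icc_one_eq_sum_fin_sub {M : Type*} [AddCommMonoid M] (m : ℕ) (f : ℕ → M) :
    ∑ d ∈ Icc 1 m, f d = ∑ j : Fin m, f (m - j) := by
  rw [Fin.sum_univ_eq_sum_range (fun j => f (m - j)), range_eq_Ico,
    sum_Ico_reflect f 0 m.le_succ, Nat.add_sub_cancel_left, Nat.sub_zero, Ico_add_one_right_eq_Icc]

namespace Polynomial

variable {R : Type*} [CommRing R]

theorem coeff_divByMonic_eq_zero_of_natDegree_lt {f g : R[X]} (hg : g.Monic) {n : ℕ}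
    (h : f.natDegree < n + g.natDegree) : (f /ₘ g).coeff n = 0 := by
  nontriviality R
  by_cases hfg : f.degree < g.degree
  · rw [(divByMonic_eq_zero_iff hg).2 hfg, coeff_zero]
  · refine coeff_eq_zero_of_natDegree_lt ?_
    have := natDegree_le_natDegree (not_lt.1 hfg)
    rw [natDegree_divByMonic f hg]
    omega

theorem degree_sum_mul_pow_lt_degree_pow [IsDomain R] {g : R[X]} (hg : g.Monic) {n : ℕ}
    {r : Fin n → R[X]} (hr : ∀ j, (r j).degree < g.degree) :
    (∑ j, r j * g ^ (j : ℕ)).degree < (g ^ n).degree := by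
  refine (degree_sum_le _ _).trans_lt <|
    (Finset.sup_lt_iff (bot_lt_iff_ne_bot.2 (degree_ne_bot.2 (hg.pow n).ne_zero))).2 fun j _ => ?_
  calc (r j * g ^ (j : ℕ)).degree = (r j).degree + (g ^ (j : ℕ)).degree := (hg.pow _).degree_mul
    _ < g.degree + (g ^ (j : ℕ)).degree :=
        WithBot.add_lt_add_right (degree_ne_bot.2 (hg.pow _).ne_zero) (hr j)
    _ = (g ^ ((j : ℕ) + 1)).degree := by rw [pow_succ', degree_mul]
    _ ≤ (g ^ n).degree := by
        rw [degree_pow, degree_pow]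
        exact nsmul_le_nsmul_left (zero_le_degree_iff.2 hg.ne_zero) j.2

theorem degree_sum_rem_mul_prod_pow_lt [IsDomain R] {ι : Type*} [DecidableEq ι] {s : Finset ι}
    {g : ι → R[X]} (hg : ∀ i ∈ s, (g i).Monic) {n : ι → ℕ} {r : (i : ι) → Fin (n i) → R[X]}
    (hr : ∀ i ∈ s, ∀ j, (r i j).degree < (g i).degree) :
    (∑ i ∈ s, ∑ j, r i j * g i ^ (j : ℕ) * ∏ k ∈ s.erase i, g k ^ n k).degree <
      (∏ i ∈ s, g i ^ n i).degree := by
  have hprod (t : Finset ι) (ht : t ⊆ s) : (∏ k ∈ t, g k ^ n k).Monic :=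
    monic_prod_of_monic _ _ fun k hk => (hg k (ht hk)).pow _
  refine (degree_sum_le _ _).trans_lt <|
    (Finset.sup_lt_iff (bot_lt_iff_ne_bot.2 (degree_ne_bot.2 (hprod s le_rfl).ne_zero))).2
      fun i hi => ?_
  have hrest := hprod _ (erase_subset i s)
  rw [← sum_mul, ← mul_prod_erase s _ hi, hrest.degree_mul, hrest.degree_mul]
  exact WithBot.add_lt_add_right (degree_ne_bot.2 hrest.ne_zero)
    (degree_sum_mul_pow_lt_degree_pow (hg i hi) (hr i hi))

theorem exists_eq_divByMonic_mul_prod_pow_add_sum_rem_mul_prod_pow [IsDomain R] {ι : Type*}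
    [DecidableEq ι] {s : Finset ι} (f : R[X]) {g : ι → R[X]} (hg : ∀ i ∈ s, (g i).Monic)
    (hgg : Set.Pairwise s fun i j => IsCoprime (g i) (g j)) (n : ι → ℕ) :
    ∃ r : (i : ι) → Fin (n i) → R[X], (∀ i ∈ s, ∀ j, (r i j).degree < (g i).degree) ∧
      f = f /ₘ (∏ i ∈ s, g i ^ n i) * (∏ i ∈ s, g i ^ n i) +
        ∑ i ∈ s, ∑ j, r i j * g i ^ (j : ℕ) * ∏ k ∈ s.erase i, g k ^ n k := by
  obtain ⟨q, r, hr, hf⟩ := eq_quo_mul_prod_pow_add_sum_rem_mul_prod_pow f hg hgg n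
  have hP : (∏ i ∈ s, g i ^ n i).Monic := monic_prod_of_monic _ _ fun i hi => (hg i hi).pow _
  have hq := (div_modByMonic_unique (f := f) q _ hP
    ⟨by rw [hf]; ring, degree_sum_rem_mul_prod_pow_lt hg hr⟩).1
  exact ⟨r, hr, hq ▸ hf⟩

section Algebra

variable {K : Type*} [CommRing K] [Algebra R[X] K]

theorem algebraMap_pow_mul_pow_of_mul_eq_one {g : R[X]} {u : K}
    (hu : u * algebraMap R[X] K g = 1) {j n : ℕ} (h : j ≤ n) :
    algebraMap R[X] K (g ^ j) * u ^ n = u ^ (n - j) := by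
  rw [← Nat.sub_add_cancel h, pow_add, map_pow, ← mul_assoc, mul_comm, ← mul_assoc, ← mul_pow,
    hu, one_pow, one_mul, Nat.add_sub_cancel]

theorem algebraMap_prod_pow_mul_prod_pow_of_mul_eq_one {ι : Type*} {t : Finset ι}
    {g : ι → R[X]} {u : ι → K} (hu : ∀ i ∈ t, u i * algebraMap R[X] K (g i) = 1) (n : ι → ℕ) :
    algebraMap R[X] K (∏ i ∈ t, g i ^ n i) * ∏ i ∈ t, u i ^ n i = 1 := by
  rw [map_prod, ← prod_mul_distrib]
  exact prod_eq_one fun i hi => by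
    rw [algebraMap_pow_mul_pow_of_mul_eq_one (hu i hi) le_rfl, Nat.sub_self, pow_zero]

theorem algebraMap_mul_prod_erase_mul_prod_pow_of_mul_eq_one {ι : Type*} [DecidableEq ι]
    {t : Finset ι} {g : ι → R[X]} {u : ι → K} (hu : ∀ i ∈ t, u i * algebraMap R[X] K (g i) = 1)
    (n : ι → ℕ) (r : R[X]) {i : ι} (hi : i ∈ t) {j : ℕ} (hj : j ≤ n i) :
    algebraMap R[X] K (r * g i ^ j * ∏ k ∈ t.erase i, g k ^ n k) * ∏ k ∈ t, u k ^ n k =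
      algebraMap R[X] K r * u i ^ (n i - j) := by
  rw [← mul_prod_erase t _ hi, map_mul, map_mul]
  calc _ = algebraMap R[X] K r * (algebraMap R[X] K (g i ^ j) * u i ^ n i) *
        (algebraMap R[X] K (∏ k ∈ t.erase i, g k ^ n k) * ∏ k ∈ t.erase i, u k ^ n k) := by
        ring
    _ = _ := by
        rw [algebraMap_pow_mul_pow_of_mul_eq_one (hu i hi) hj,
          algebraMap_prod_pow_mul_prod_pow_of_mul_eq_one (fun k hk => hu k (mem_of_mem_erase hk)),
          mul_one]

theorem algebraMap_mul_prod_pow_eq_divByMonic_add_sum [IsDomain R] {ι : Type*}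
    {s : Finset ι} (f : R[X]) {g : ι → R[X]} (hg : ∀ i ∈ s, (g i).Monic)
    (hgg : Set.Pairwise s fun i j => IsCoprime (g i) (g j)) (n : ι → ℕ) {u : ι → K}
    (hu : ∀ i ∈ s, u i * algebraMap R[X] K (g i) = 1) :
    ∃ r : (i : ι) → Fin (n i) → R[X], (∀ i ∈ s, ∀ j, (r i j).degree < (g i).degree) ∧
      algebraMap R[X] K f * ∏ i ∈ s, u i ^ n i =
        algebraMap R[X] K (f /ₘ ∏ i ∈ s, g i ^ n i) +
          ∑ i ∈ s, ∑ j, algebraMap R[X] K (r i j) * u i ^ (n i - j) := by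
  classical
  obtain ⟨r, hr, hf⟩ := exists_eq_divByMonic_mul_prod_pow_add_sum_rem_mul_prod_pow f hg hgg n
  refine ⟨r, hr, ?_⟩
  conv_lhs => rw [hf]
  rw [map_add, map_mul, add_mul, mul_assoc, algebraMap_prod_pow_mul_prod_pow_of_mul_eq_one hu,
    mul_one, map_sum, sum_mul]
  refine congrArg _ (sum_congr rfl fun i hi => ?_)
  rw [map_sum, sum_mul]
  exact sum_congr rfl fun j _ =>
    algebraMap_mul_prod_erase_mul_prod_pow_of_mul_eq_one hu n _ hi j.2.le

theorem exists_mul_prod_pow_eq_divByMonic_add_sum_C_mul_pow {F : Type*} [Field F]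
    [Algebra F[X] K] (f : F[X]) (s : Finset F) (n : F → ℕ) {u : F → K}
    (hu : ∀ ζ ∈ s, u ζ * algebraMap F[X] K (X - C ζ) = 1) :
    ∃ a : F → ℕ → F, algebraMap F[X] K f * ∏ ζ ∈ s, u ζ ^ n ζ =
      algebraMap F[X] K (f /ₘ ∏ ζ ∈ s, (X - C ζ) ^ n ζ) +
        ∑ ζ ∈ s, ∑ d ∈ Icc 1 (n ζ), algebraMap F[X] K (C (a ζ d)) * u ζ ^ d := by
  obtain ⟨r, hr, hf⟩ := algebraMap_mul_prod_pow_eq_divByMonic_add_sum f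
    (fun ζ _ => monic_X_sub_C ζ) ((pairwise_coprime_X_sub_C Function.injective_id).set_pairwise _)
    n hu
  -- the remainder `r ζ j` sits over `(X - ζ) ^ (n ζ - j)`
  refine ⟨fun ζ d => if h : n ζ - d < n ζ then (r ζ ⟨n ζ - d, h⟩).coeff 0 else 0, hf.trans ?_⟩
  refine congrArg _ (sum_congr rfl fun ζ hζ => ?_)
  rw [sum_Icc_one_eq_sum_fin_sub]
  refine sum_congr rfl fun j _ => ?_
  have hj : n ζ - (n ζ - j) = j := Nat.sub_sub_self j.2.le
  dsimp only
  rw [dif_pos (by omega)]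
  simp only [hj, Fin.eta]
  rw [← eq_C_of_degree_le_zero (Nat.WithBot.lt_one_iff_le_zero.1 (degree_X_sub_C ζ ▸ hr ζ hζ j))]

end Algebra

theorem ne_zero_of_mem_roots_of_eval_zero_ne_zero [IsDomain R] {p : R[X]} {ζ : R}
    (hp : p.eval 0 ≠ 0) (hζ : ζ ∈ p.roots) : ζ ≠ 0 := by
  rintro rfl
  exact hp (isRoot_of_mem_roots hζ)

theorem C_leadingCoeff_mul_prod_X_sub_C_pow_rootMultiplicity {F : Type*} [Field F]
    [IsAlgClosed F] [DecidableEq F] (p : F[X]) :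
    C p.leadingCoeff * ∏ ζ ∈ p.roots.toFinset, (X - C ζ) ^ p.rootMultiplicity ζ = p := by
  rw [← prod_multiset_root_eq_finset_root]
  exact C_leadingCoeff_mul_prod_multiset_X_sub_C IsAlgClosed.card_roots_eq_natDegree

end Polynomial

namespace PowerSeries

theorem algebraMap_polynomial_eq_coe {R : Type*} [CommSemiring R] (p : R[X]) :
    algebraMap R[X] R⟦X⟧ p = p := by
  simp [algebraMap_apply']

variable {k : Type*} [Field k]

theorem inv_X_sub_C_eq {ζ : k} (hζ : ζ ≠ 0) :
    (X - C ζ : k⟦X⟧)⁻¹ = C (-ζ⁻¹) * rescale ζ⁻¹ (mk 1) := by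
  rw [inv_eq_iff_mul_eq_one (by simpa using hζ)]
  have hlin : C (-ζ⁻¹) * (X - C ζ : k⟦X⟧) = rescale ζ⁻¹ (1 - X) := by
    rw [map_sub, map_one, rescale_X, mul_sub, ← map_mul, neg_mul, inv_mul_cancel₀ hζ]
    simp only [map_neg, map_one, neg_mul]
    ring
  rw [mul_right_comm, hlin, mul_comm, ← map_mul, mk_one_mul_one_sub_eq_one, map_one]

theorem coeff_inv_X_sub_C_pow {ζ : k} (hζ : ζ ≠ 0) (d n : ℕ) :
    coeff n ((X - C ζ : k⟦X⟧)⁻¹ ^ (d + 1)) = (-ζ⁻¹) ^ (d + 1) * (d + n).choose d * ζ⁻¹ ^ n := by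
  rw [inv_X_sub_C_eq hζ, mul_pow, ← map_pow, ← map_pow, mk_one_pow_eq_mk_choose_add, coeff_C_mul,
    coeff_rescale, coeff_mk]
  ring

variable [IsAlgClosed k] [DecidableEq k]

theorem coe_inv_eq_C_mul_prod_inv_X_sub_C_pow {D : k[X]} (hD0 : D.eval 0 ≠ 0) :
    (D : k⟦X⟧)⁻¹ =
      C D.leadingCoeff⁻¹ * ∏ ζ ∈ D.roots.toFinset, (X - C ζ : k⟦X⟧)⁻¹ ^ D.rootMultiplicity ζ := by
  have hc : D.leadingCoeff ≠ 0 := leadingCoeff_ne_zero.2 fun h => hD0 (by simp [h])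
  have hD : (D : k⟦X⟧) =
      C D.leadingCoeff * ∏ ζ ∈ D.roots.toFinset, (X - C ζ : k⟦X⟧) ^ D.rootMultiplicity ζ := by
    conv_lhs => rw [← C_leadingCoeff_mul_prod_X_sub_C_pow_rootMultiplicity D]
    simp only [← Polynomial.coeToPowerSeries.ringHom_apply, map_mul, map_prod, map_pow, map_sub]
    simp
  rw [inv_eq_iff_mul_eq_one (by simpa [coeff_zero_eq_eval_zero] using hD0), hD,
    mul_mul_mul_comm, ← map_mul, inv_mul_cancel₀ hc, map_one, one_mul, ← prod_mul_distrib]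
  refine prod_eq_one fun ζ hζ => ?_
  have hζ0 := ne_zero_of_mem_roots_of_eval_zero_ne_zero hD0 (Multiset.mem_toFinset.1 hζ)
  rw [← mul_pow, PowerSeries.inv_mul_cancel _ (by simpa using hζ0), one_pow]

theorem exists_coe_mul_coe_inv_eq_add_sum_inv_X_sub_C_pow (N : k[X]) {D : k[X]}
    (hD0 : D.eval 0 ≠ 0) :
    ∃ a : k → ℕ → k, (N : k⟦X⟧) * (D : k⟦X⟧)⁻¹ =
      C D.leadingCoeff⁻¹ *
          ↑(N /ₘ ∏ ζ ∈ D.roots.toFinset, (Polynomial.X - Polynomial.C ζ) ^ D.rootMultiplicity ζ) +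
        ∑ ζ ∈ D.roots.toFinset, ∑ d ∈ Icc 1 (D.rootMultiplicity ζ),
          C (a ζ d) * (X - C ζ : k⟦X⟧)⁻¹ ^ d := by
  have hu : ∀ ζ ∈ D.roots.toFinset,
      (X - C ζ : k⟦X⟧)⁻¹ * algebraMap k[X] k⟦X⟧ (Polynomial.X - Polynomial.C ζ) = 1 := by
    intro ζ hζ
    have hζ0 := ne_zero_of_mem_roots_of_eval_zero_ne_zero hD0 (Multiset.mem_toFinset.1 hζ)
    simpa [algebraMap_apply'] using PowerSeries.inv_mul_cancel _ (by simpa using hζ0)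
  obtain ⟨a, ha⟩ := exists_mul_prod_pow_eq_divByMonic_add_sum_C_mul_pow N D.roots.toFinset
    (fun ζ => D.rootMultiplicity ζ) hu
  refine ⟨fun ζ d => D.leadingCoeff⁻¹ * a ζ d, ?_⟩
  simp only [algebraMap_polynomial_eq_coe, Polynomial.coe_C] at ha
  rw [coe_inv_eq_C_mul_prod_inv_X_sub_C_pow hD0, mul_left_comm, ha, mul_add, mul_sum]
  simp only [mul_sum, map_mul, mul_assoc]

end PowerSeries

theorem risingFactorialC_natCast_add_one (n d : ℕ) :
    risingFactorialC ((n : ℂ) + 1) d = d ! * (n + d).choose d := by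
  rw [← Nat.cast_mul, ← Nat.ascFactorial_eq_factorial_mul_choose, Nat.ascFactorial_eq_prod_range,
    risingFactorialC]
  push_cast
  rfl

theorem ratfun_coeff_partial_fractions (N D : Polynomial ℂ) (hD0 : D.eval 0 ≠ 0) :
    ∃ h : ℂ → ℕ → ℂ, ∀ n : ℕ, (N.natDegree : ℤ) - D.natDegree + 1 ≤ (n : ℤ) →
      PowerSeries.coeff (R := ℂ) n ((N : PowerSeries ℂ) * (D : PowerSeries ℂ)⁻¹) =
        ∑ ζ ∈ D.roots.toFinset, ∑ d ∈ Finset.Icc 1 (D.rootMultiplicity ζ),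
          h ζ d * risingFactorialC ((n : ℂ) + 1) (d - 1) * ζ⁻¹ ^ n := by
  obtain ⟨a, ha⟩ := PowerSeries.exists_coe_mul_coe_inv_eq_add_sum_inv_X_sub_C_pow N hD0
  refine ⟨fun ζ d => a ζ d * (-ζ⁻¹) ^ d / (d - 1)!, fun n hn => ?_⟩
  have hq : (N /ₘ ∏ ζ ∈ D.roots.toFinset, (X - C ζ) ^ D.rootMultiplicity ζ).coeff n = 0 := by
    have hdeg := congrArg natDegree (C_leadingCoeff_mul_prod_X_sub_C_pow_rootMultiplicity D)
    rw [natDegree_C_mul (leadingCoeff_ne_zero.2 fun h => hD0 (by simp [h]))] at hdeg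
    exact coeff_divByMonic_eq_zero_of_natDegree_lt
      (monic_prod_of_monic _ _ fun ζ _ => (monic_X_sub_C ζ).pow _) (by omega)
  rw [ha, map_add, PowerSeries.coeff_C_mul, Polynomial.coeff_coe, hq, mul_zero, zero_add, map_sum]
  refine sum_congr rfl fun ζ hζ => ?_
  rw [map_sum]
  refine sum_congr rfl fun d hd => ?_
  obtain ⟨e, rfl⟩ : ∃ e, d = e + 1 := Nat.exists_eq_add_of_le' (mem_Icc.1 hd).1
  have hζ0 := ne_zero_of_mem_roots_of_eval_zero_ne_zero hD0 (Multiset.mem_toFinset.1 hζ)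
  have he : (e ! : ℂ) ≠ 0 := Nat.cast_ne_zero.2 e.factorial_ne_zero
  rw [PowerSeries.coeff_C_mul, PowerSeries.coeff_inv_X_sub_C_pow hζ0,
    risingFactorialC_natCast_add_one]
  simp only [Nat.add_sub_cancel, add_comm n e]
  field_simp
end

section
/- Let (u_n) be a sequence of complex numbers, (v_n) a sequence of nonnegative reals, Q : ℕ → ℝ, and let α > 0, K > 0, M ≥ 0 be reals, T, r ∈ ℕ with r ≥ 1, and N ≥ 1 an integer. Assume: (i) for all n ≥ N, Q(n) > 0 and Q(n)·|u_n| ≤ Σ_{j=0}^{n−1} M · n^{r−1} · C(n−1−j+T, T) · α^{n−1−j} · |u_j|; (ii) M·n^r ≤ α·K·Q(n) for all n ≥ N; (iii) v_n = (1/n) · Σ_{j=0}^{n−1} K · C(n−1−j+T, T) · α^{n−j} · v_j for all n ≥ 1; (iv) |u_n| ≤ v_n for all n ≤ N. Then |u_n| ≤ v_n for all n ∈ ℕ. -/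
/-!
Strong induction on `n`. Past `N`, write both recurrences against the common weights
`w j = C(n-1-j+T, T) α^(n-1-j)`: then `Q n ‖u n‖ ≤ M n^(r-1) ∑ w j ‖u j‖` and
`v n = (K α / n) ∑ w j v j`, and `M n^(r-1) ≤ Q n · K α / n` is hypothesis (ii) divided by `n`.
-/

open Finset

theorem le_of_mul_le_weighted_sum {𝕜 ι : Type*} [Field 𝕜] [LinearOrder 𝕜]
    [IsStrictOrderedRing 𝕜] (s : Finset ι) (w a b : ι → 𝕜) {q x y A B : 𝕜}
    (hq : 0 < q) (hA : 0 ≤ A) (hAB : A ≤ q * B) (hw : ∀ i ∈ s, 0 ≤ w i)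
    (ha : ∀ i ∈ s, 0 ≤ a i) (hab : ∀ i ∈ s, a i ≤ b i)
    (hx : q * x ≤ A * ∑ i ∈ s, w i * a i) (hy : y = B * ∑ i ∈ s, w i * b i) :
    x ≤ y := by
  have hsum : ∑ i ∈ s, w i * a i ≤ ∑ i ∈ s, w i * b i :=
    sum_le_sum fun i hi => mul_le_mul_of_nonneg_left (hab i hi) (hw i hi)
  have hsum_nonneg : 0 ≤ ∑ i ∈ s, w i * b i :=
    sum_nonneg fun i hi => mul_nonneg (hw i hi) ((ha i hi).trans (hab i hi))
  refine le_of_mul_le_mul_left ?_ hq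
  calc q * x ≤ A * ∑ i ∈ s, w i * a i := hx
    _ ≤ A * ∑ i ∈ s, w i * b i := mul_le_mul_of_nonneg_left hsum hA
    _ ≤ q * B * ∑ i ∈ s, w i * b i := mul_le_mul_of_nonneg_right hAB hsum_nonneg
    _ = q * y := by rw [hy, mul_assoc]

theorem sum_range_mul_pow_sub {R : Type*} [CommSemiring R] (c f : ℕ → R) (K α : R)
    (n : ℕ) :
    ∑ j ∈ range n, K * c j * α ^ (n - j) * f j =
      K * α * ∑ j ∈ range n, c j * α ^ (n - 1 - j) * f j := by
  rw [mul_sum]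
  refine sum_congr rfl fun j hj => ?_
  rw [show n - j = n - 1 - j + 1 by have := mem_range.1 hj; omega, pow_succ]
  ring

theorem mul_pow_pred_le_div {𝕜 : Type*} [Field 𝕜] [LinearOrder 𝕜] [IsStrictOrderedRing 𝕜]
    {M c x : 𝕜} {r : ℕ} (hx : 0 < x) (hr : 1 ≤ r) (h : M * x ^ r ≤ c) :
    M * x ^ (r - 1) ≤ c / x := by
  rwa [le_div_iff₀ hx, mul_assoc, ← pow_succ, Nat.sub_add_cancel hr]

theorem majorant_sequence_induction_general (u : ℕ → ℂ) (v : ℕ → ℝ) (Q : ℕ → ℝ)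
    (α K M : ℝ) (hα : 0 < α) (hM : 0 ≤ M)
    (T r : ℕ) (hr : 1 ≤ r) (N : ℕ)
    (h1 : ∀ n, N ≤ n → 0 < Q n ∧ Q n * ‖u n‖ ≤
      ∑ j ∈ Finset.range n, M * (n : ℝ) ^ (r - 1) * ((n - 1 - j + T).choose T) *
        α ^ (n - 1 - j) * ‖u j‖)
    (h2 : ∀ n, N ≤ n → M * (n : ℝ) ^ r ≤ α * K * Q n)
    (h3 : ∀ n, 1 ≤ n → v n = (1 / (n : ℝ)) *
      ∑ j ∈ Finset.range n, K * ((n - 1 - j + T).choose T) * α ^ (n - j) * v j)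
    (h4 : ∀ n, n ≤ N → ‖u n‖ ≤ v n) :
    ∀ n, ‖u n‖ ≤ v n := by
  intro n
  induction n using Nat.strong_induction_on with
  | _ n ih =>
    rcases le_or_gt n N with hle | hlt
    · exact h4 n hle
    have hn : (0 : ℝ) < n := by exact_mod_cast (Nat.zero_le N).trans_lt hlt
    obtain ⟨hQ, hu⟩ := h1 n hlt.le
    refine le_of_mul_le_weighted_sum (range n)
      (fun j => ((n - 1 - j + T).choose T : ℝ) * α ^ (n - 1 - j)) (fun j => ‖u j‖) v hQ
      (A := M * (n : ℝ) ^ (r - 1)) (B := K * α / n) (by positivity)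
      ((mul_pow_pred_le_div hn hr (h2 n hlt.le)).trans_eq (by ring))
      (fun j _ => by positivity) (fun j _ => norm_nonneg _)
      (fun j hj => ih j (mem_range.1 hj)) (hu.trans_eq ?_) ?_
    · rw [mul_sum]
      exact sum_congr rfl fun j _ => by ring
    · rw [h3 n (by exact_mod_cast hn),
        sum_range_mul_pow_sub (fun j => ((n - 1 - j + T).choose T : ℝ)) v]
      ring

theorem majorant_sequence_induction (u : ℕ → ℂ) (v : ℕ → ℝ) (Q : ℕ → ℝ)
    (α K M : ℝ) (hα : 0 < α) (hK : 0 < K) (hM : 0 ≤ M)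
    (T r : ℕ) (hr : 1 ≤ r) (N : ℕ) (hN : 1 ≤ N)
    (hv0 : ∀ n, 0 ≤ v n)
    (h1 : ∀ n, N ≤ n → 0 < Q n ∧ Q n * ‖u n‖ ≤
      ∑ j ∈ Finset.range n, M * (n : ℝ) ^ (r - 1) * ((n - 1 - j + T).choose T) *
        α ^ (n - 1 - j) * ‖u j‖)
    (h2 : ∀ n, N ≤ n → M * (n : ℝ) ^ r ≤ α * K * Q n)
    (h3 : ∀ n, 1 ≤ n → v n = (1 / (n : ℝ)) *
      ∑ j ∈ Finset.range n, K * ((n - 1 - j + T).choose T) * α ^ (n - j) * v j)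
    (h4 : ∀ n, n ≤ N → ‖u n‖ ≤ v n) :
    ∀ n, ‖u n‖ ≤ v n :=
  majorant_sequence_induction_general u v Q α K M hα hM T r hr N h1 h2 h3 h4
end

section
/- Let T ≥ 1 be an integer and K, α > 0 real numbers. The function v(x) = exp((K/T)·(1−αx)^{−T}) is analytic on the interval (−1/α, 1/α) and satisfies the differential equation v'(x) = αK·(1−αx)^{−T−1}·v(x) there; consequently its Taylor coefficients (v_n) at 0 are nonnegative and satisfy, for all n ≥ 1, the recurrence n·v_n = Σ_{j=0}^{n−1} K · C(n−1−j+T, T) · α^{n−j} · v_j. -/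
/-!
With `h x = αK (1 - αx)^{-(T+1)}` the chain rule gives `v' = h v`, and `h` has the Taylor
coefficients `αK · C(T+j, T) · α^j ≥ 0`. Leibniz' rule turns `v' = h v` into the Cauchy
product recurrence `(n+1) v_{n+1} = ∑_{j ≤ n} h_j v_{n-j}`: it gives `v_n ≥ 0` by induction from
`v_0 = exp (K/T) > 0`, and the stated recurrence after reversing the order of summation.
-/

/-- The majorant function `v(x) = exp((K/T)·(1-αx)^{-T})`. -/
noncomputable def majorantFun (K α : ℝ) (T : ℕ) : ℝ → ℝ :=
  fun x => Real.exp (K / T * ((1 - α * x) ^ T)⁻¹)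

/-- The `n`-th Taylor coefficient of `f` at `0`. -/
noncomputable def taylorCoeff (f : ℝ → ℝ) (n : ℕ) : ℝ :=
  iteratedDeriv n f 0 / n.factorial

open Finset Filter Topology
open scoped ContDiff

theorem taylorCoeff_const_mul (c : ℝ) (f : ℝ → ℝ) (n : ℕ) :
    taylorCoeff (fun x => c * f x) n = c * taylorCoeff f n := by
  simp only [taylorCoeff, iteratedDeriv_const_mul_field, mul_div_assoc]

theorem succ_mul_taylorCoeff_succ_of_deriv_eq_mul {f h : ℝ → ℝ} (hf : ContDiffAt ℝ ∞ f 0)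
    (hh : ContDiffAt ℝ ∞ h 0) (hderiv : deriv f =ᶠ[𝓝 0] fun x => h x * f x) (n : ℕ) :
    (n + 1 : ℝ) * taylorCoeff f (n + 1) =
      ∑ j ∈ range (n + 1), taylorCoeff h j * taylorCoeff f (n - j) := by
  have hleibniz : iteratedDeriv (n + 1) f 0 = ∑ j ∈ range (n + 1),
      n.choose j * iteratedDeriv j h 0 * iteratedDeriv (n - j) f 0 := by
    rw [iteratedDeriv_succ', hderiv.iteratedDeriv_eq,
      iteratedDeriv_fun_mul (hh.of_le (mod_cast le_top)) (hf.of_le (mod_cast le_top))]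
  have hfac : ((n + 1).factorial : ℝ) = (n + 1) * n.factorial := by
    push_cast [Nat.factorial_succ]; ring
  rw [taylorCoeff, hleibniz, hfac, ← mul_div_assoc, mul_div_mul_left _ _ (by positivity), sum_div]
  refine sum_congr rfl fun j hj => ?_
  have hjn := mem_range_succ_iff.mp hj
  have hchoose : (n.choose j : ℝ) ≠ 0 := mod_cast (Nat.choose_pos hjn).ne'
  rw [← Nat.choose_mul_factorial_mul_factorial hjn]
  simp only [taylorCoeff]
  push_cast
  field_simp

theorem taylorCoeff_nonneg_of_deriv_eq_mul {f h : ℝ → ℝ} (hf : ContDiffAt ℝ ∞ f 0)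
    (hh : ContDiffAt ℝ ∞ h 0) (hderiv : deriv f =ᶠ[𝓝 0] fun x => h x * f x)
    (hf0 : 0 ≤ f 0) (hh_nonneg : ∀ j, 0 ≤ taylorCoeff h j) (n : ℕ) :
    0 ≤ taylorCoeff f n := by
  induction n using Nat.strong_induction_on with
  | _ n ih =>
    rcases n with _ | n
    · simpa [taylorCoeff] using hf0
    have hrec := succ_mul_taylorCoeff_succ_of_deriv_eq_mul hf hh hderiv n
    have hsum : 0 ≤ ∑ j ∈ range (n + 1), taylorCoeff h j * taylorCoeff f (n - j) :=
      sum_nonneg fun j _ => mul_nonneg (hh_nonneg j) (ih _ (by omega))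
    rw [← hrec] at hsum
    exact (mul_nonneg_iff_of_pos_left (by positivity)).mp hsum

theorem eventually_one_sub_mul_ne_zero (α : ℝ) : ∀ᶠ y in 𝓝 (0 : ℝ), 1 - α * y ≠ 0 :=
  (continuous_const.sub (continuous_const.mul continuous_id)).continuousAt.eventually_ne
    (by simp)

theorem analyticAt_inv_one_sub_mul_pow (α : ℝ) (S : ℕ) {x : ℝ} (hx : 1 - α * x ≠ 0) :
    AnalyticAt ℝ (fun y => ((1 - α * y) ^ S)⁻¹) x :=
  ((analyticAt_const.sub (analyticAt_const.mul analyticAt_id)).pow S).inv (pow_ne_zero S hx)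

theorem hasDerivAt_inv_one_sub_mul_pow (α : ℝ) (S : ℕ) {x : ℝ} (hx : 1 - α * x ≠ 0) :
    HasDerivAt (fun y => ((1 - α * y) ^ S)⁻¹) (S * α * ((1 - α * x) ^ (S + 1))⁻¹) x := by
  have h : HasDerivAt (fun y => ((1 - α * y) ^ S)⁻¹) _ x :=
    ((((hasDerivAt_id x).const_mul α).const_sub 1).pow S).inv (pow_ne_zero S hx)
  refine h.congr_deriv ?_
  rcases S with _ | S
  · simp
  · simp only [id, Pi.pow_apply, Nat.add_sub_cancel]
    field_simp
    ring

theorem iteratedDeriv_inv_one_sub_mul_pow_zero (α : ℝ) (S k : ℕ) :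
    iteratedDeriv k (fun y => ((1 - α * y) ^ S)⁻¹) 0 = S.ascFactorial k * α ^ k := by
  induction k generalizing S with
  | zero => simp
  | succ k ih =>
    have hderiv : deriv (fun y => ((1 - α * y) ^ S)⁻¹) =ᶠ[𝓝 0]
        fun y => (S * α) * ((1 - α * y) ^ (S + 1))⁻¹ := by
      filter_upwards [eventually_one_sub_mul_ne_zero α] with y hy
      exact (hasDerivAt_inv_one_sub_mul_pow α S hy).deriv
    rw [iteratedDeriv_succ', hderiv.iteratedDeriv_eq, iteratedDeriv_const_mul_field, ih,
      Nat.ascFactorial_succ, ← Nat.succ_ascFactorial]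
    push_cast
    ring

theorem taylorCoeff_inv_one_sub_mul_pow_succ (α : ℝ) (S j : ℕ) :
    taylorCoeff (fun y => ((1 - α * y) ^ (S + 1))⁻¹) j = (S + j).choose S * α ^ j := by
  rw [taylorCoeff, iteratedDeriv_inv_one_sub_mul_pow_zero,
    Nat.ascFactorial_eq_factorial_mul_choose, Nat.choose_symm_add]
  push_cast
  field_simp

theorem analyticAt_majorantFun (K α : ℝ) (T : ℕ) {x : ℝ} (hx : 1 - α * x ≠ 0) :
    AnalyticAt ℝ (majorantFun K α T) x :=
  (analyticAt_const.mul (analyticAt_inv_one_sub_mul_pow α T hx)).rexp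

theorem hasDerivAt_majorantFun (K α : ℝ) {T : ℕ} (hT : T ≠ 0) {x : ℝ} (hx : 1 - α * x ≠ 0) :
    HasDerivAt (majorantFun K α T)
      (α * K * ((1 - α * x) ^ (T + 1))⁻¹ * majorantFun K α T x) x := by
  have h : HasDerivAt (majorantFun K α T) _ x :=
    ((hasDerivAt_inv_one_sub_mul_pow α T hx).const_mul (K / T)).exp
  refine h.congr_deriv ?_
  simp only [majorantFun]
  field_simp

theorem majorant_fun_analytic_ode_recurrence (T : ℕ) (hT : 1 ≤ T) (K α : ℝ)
    (hK : 0 < K) (hα : 0 < α) :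
    (∀ x ∈ Set.Ioo (-(1 / α)) (1 / α), AnalyticAt ℝ (majorantFun K α T) x) ∧
    (∀ x ∈ Set.Ioo (-(1 / α)) (1 / α),
      deriv (majorantFun K α T) x =
        α * K * ((1 - α * x) ^ (T + 1))⁻¹ * majorantFun K α T x) ∧
    (∀ n : ℕ, 0 ≤ taylorCoeff (majorantFun K α T) n) ∧
    (∀ n : ℕ, 1 ≤ n →
      (n : ℝ) * taylorCoeff (majorantFun K α T) n =
        ∑ j ∈ Finset.range n, K * ((n - 1 - j + T).choose T) * α ^ (n - j) *
          taylorCoeff (majorantFun K α T) j) := by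
  have hIoo : ∀ x ∈ Set.Ioo (-(1 / α)) (1 / α), 1 - α * x ≠ 0 := fun x hx => by
    have := (lt_div_iff₀' hα).mp hx.2
    linarith
  have hT0 : T ≠ 0 := by omega
  set v := majorantFun K α T
  set h := fun y => α * K * ((1 - α * y) ^ (T + 1))⁻¹
  have hderiv : deriv v =ᶠ[𝓝 0] fun y => h y * v y := by
    filter_upwards [eventually_one_sub_mul_ne_zero α] with y hy
    exact (hasDerivAt_majorantFun K α hT0 hy).deriv
  have hv : ContDiffAt ℝ ∞ v 0 := (analyticAt_majorantFun K α T (by simp)).contDiffAt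
  have hh : ContDiffAt ℝ ∞ h 0 :=
    (analyticAt_const.mul (analyticAt_inv_one_sub_mul_pow α (T + 1) (by simp))).contDiffAt
  have hcoeff (j : ℕ) : taylorCoeff h j = α * K * ((T + j).choose T * α ^ j) := by
    rw [taylorCoeff_const_mul, taylorCoeff_inv_one_sub_mul_pow_succ]
  refine ⟨fun x hx => analyticAt_majorantFun K α T (hIoo x hx),
    fun x hx => (hasDerivAt_majorantFun K α hT0 (hIoo x hx)).deriv,
    taylorCoeff_nonneg_of_deriv_eq_mul hv hh hderiv (Real.exp_pos _).le
      fun j => by rw [hcoeff]; positivity, fun n hn => ?_⟩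
  obtain ⟨m, rfl⟩ : ∃ m, n = m + 1 := ⟨n - 1, by omega⟩
  rw [Nat.cast_succ, succ_mul_taylorCoeff_succ_of_deriv_eq_mul hv hh hderiv, ← sum_range_reflect]
  refine sum_congr rfl fun j hj => ?_
  have hjm := mem_range_succ_iff.mp hj
  rw [hcoeff, show m + 1 - 1 - j = m - j by omega, show m - (m - j) = j by omega,
    show m + 1 - j = m - j + 1 by omega, add_comm T]
  ring
end

section
/- Let T ≥ 1 be an integer, K > 0 and α > 0 real numbers. For every n ∈ ℕ, the n-th Taylor coefficient at 0 of the function z ↦ exp((K/T)·(1−αz)^{−T}) (analytic for |z| < 1/α) equals α^n · Σ_{k=0}^{∞} (1/k!) · C(Tk+n−1, n) · (K/T)^k. -/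
/-!
With `y = αz` and `c = K/T`, expand `exp (c (1 - y)⁻ᵀ) = ∑ₖ cᵏ/k! (1 - y)^(-Tk)` and then each
`(1 - y)^(-Tk) = ∑ₙ C(Tk+n-1, n) yⁿ`. For `|y| < 1` the double series in `(k, n)` converges
absolutely, since its absolute values form the same series for `|c|` and `|y|`. Summing it over
`k` first gives a power series in `y`, whose coefficients are therefore the Taylor coefficients.
-/

open Filter Topology FormalMultilinearSeries

-- For `m = 0` the truncated subtraction gives `C(n - 1, n) = 0` for `n ≥ 1` and `C(0, 0) = 1`.
lemma hasSum_choose_mul_pow {𝕜 : Type*} [NormedDivisionRing 𝕜] [HasSummableGeomSeries 𝕜]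
    (m : ℕ) {y : 𝕜} (hy : ‖y‖ < 1) :
    HasSum (fun n : ℕ => ((m + n - 1).choose n : 𝕜) * y ^ n) ((1 - y) ^ m)⁻¹ := by
  rcases m with _ | j
  · have h := hasSum_single (f := fun n : ℕ => ((0 + n - 1).choose n : 𝕜) * y ^ n) 0 fun n hn => by
      rw [Nat.choose_eq_zero_of_lt (by omega), Nat.cast_zero, zero_mul]
    simpa using h
  · have hchoose (n : ℕ) : j + 1 + n - 1 = n + j := by omega
    simpa only [hchoose, Nat.choose_symm_add, one_div] using
      hasSum_choose_mul_geometric_of_norm_lt_one j hy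

/-- The `(k, n)` term of `exp (c (1 - y)⁻ᵀ)` expanded first in `k`, then in `n`. -/
noncomputable def expInvOneSubPowTerm (T : ℕ) (c y : ℝ) (p : ℕ × ℕ) : ℝ :=
  c ^ p.1 / p.1.factorial * ((T * p.1 + p.2 - 1).choose p.2 : ℝ) * y ^ p.2

section expInvOneSubPowTerm

variable (T : ℕ) (c : ℝ) {y : ℝ}

lemma hasSum_expInvOneSubPowTerm_row (k : ℕ) (hy : |y| < 1) :
    HasSum (fun n => expInvOneSubPowTerm T c y (k, n))
      ((c * ((1 - y) ^ T)⁻¹) ^ k / k.factorial) := by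
  have h := (hasSum_choose_mul_pow (T * k) hy).mul_left (c ^ k / k.factorial)
  rw [show c ^ k / k.factorial * ((1 - y) ^ (T * k))⁻¹ = (c * ((1 - y) ^ T)⁻¹) ^ k / k.factorial by
    rw [mul_pow, inv_pow, ← pow_mul]; ring] at h
  simpa only [expInvOneSubPowTerm, mul_assoc] using h

lemma abs_expInvOneSubPowTerm (p : ℕ × ℕ) :
    |expInvOneSubPowTerm T c y p| = expInvOneSubPowTerm T |c| |y| p := by
  simp [expInvOneSubPowTerm, abs_mul, abs_div, abs_pow]

lemma summable_expInvOneSubPowTerm (hy : |y| < 1) : Summable (expInvOneSubPowTerm T c y) := by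
  have hy' : |(|y|)| < 1 := by rwa [abs_abs]
  refine Summable.of_abs ?_
  simp_rw [abs_expInvOneSubPowTerm]
  refine (summable_prod_of_nonneg fun p => ?_).2
    ⟨fun k => (hasSum_expInvOneSubPowTerm_row T |c| k hy').summable, ?_⟩
  · unfold expInvOneSubPowTerm
    positivity
  · simp_rw [(hasSum_expInvOneSubPowTerm_row T |c| _ hy').tsum_eq]
    exact Real.summable_pow_div_factorial _

lemma hasSum_expInvOneSubPowTerm (hy : |y| < 1) :
    HasSum (expInvOneSubPowTerm T c y) (Real.exp (c * ((1 - y) ^ T)⁻¹)) := by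
  have hsum := (summable_expInvOneSubPowTerm T c hy).hasSum
  have hexp := hsum.prod_fiberwise fun k => hasSum_expInvOneSubPowTerm_row T c k hy
  rwa [hexp.unique (Real.exp_eq_exp_ℝ ▸ NormedSpace.expSeries_div_hasSum_exp _)] at hsum

lemma hasSum_exp_mul_inv_one_sub_pow (hy : |y| < 1) :
    HasSum (fun n => (∑' k : ℕ, 1 / (k.factorial : ℝ) * ((T * k + n - 1).choose n) * c ^ k) * y ^ n)
      (Real.exp (c * ((1 - y) ^ T)⁻¹)) := by
  have hswap := (Equiv.prodComm ℕ ℕ).hasSum_iff.2 (hasSum_expInvOneSubPowTerm T c hy)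
  refine hswap.prod_fiberwise fun n => ?_
  have hcol : Summable fun k => expInvOneSubPowTerm T c y (k, n) :=
    (summable_expInvOneSubPowTerm T c hy).comp_injective fun a b h => (Prod.mk.inj h).1
  have hrow : ∀ k, expInvOneSubPowTerm T c y (k, n) =
      1 / (k.factorial : ℝ) * ((T * k + n - 1).choose n) * c ^ k * y ^ n := fun k => by
    simp only [expInvOneSubPowTerm]
    ring
  simpa only [Function.comp_apply, Equiv.prodComm_apply, Prod.swap_prod_mk, hrow, tsum_mul_right]
    using hcol.hasSum

end expInvOneSubPowTerm

lemma hasFPowerSeriesAt_ofScalars_of_hasSum {f : ℝ → ℝ} {a : ℕ → ℝ} {r : ℝ} (hr : 0 < r)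
    (h : ∀ x : ℝ, |x| < r → HasSum (fun n => a n * x ^ n) (f x)) :
    HasFPowerSeriesAt f (ofScalars ℝ a) 0 := by
  refine ⟨r.toNNReal, ?_, by simpa using hr, fun {x} hx => ?_⟩
  · refine ENNReal.le_of_forall_nnreal_lt fun s hs => ?_
    have hsr : |(s : ℝ)| < r := by simpa using ENNReal.coe_lt_ofReal.mp hs
    refine le_radius_of_tendsto _ (l := 0) ?_
    simpa [ofScalars_norm] using (h s hsr).summable.tendsto_atTop_zero.norm
  · rw [Metric.mem_eball, edist_zero_right] at hx
    replace hx : |x| < r := by simpa using ENNReal.coe_lt_ofReal.mp hx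
    simpa [ofScalars_apply_eq, mul_comm] using h x hx

lemma taylorCoeff_eq_of_hasFPowerSeriesAt {f : ℝ → ℝ} {a : ℕ → ℝ}
    (h : HasFPowerSeriesAt f (ofScalars ℝ a) 0) (n : ℕ) : taylorCoeff f n = a n :=
  congrFun (ofScalars_series_injective _ _
    (h.analyticAt.hasFPowerSeriesAt.eq_formalMultilinearSeries h)) n

theorem majorant_fun_coeff_formula_general (T : ℕ) (K α : ℝ) (n : ℕ) :
    taylorCoeff (majorantFun K α T) n =
      α ^ n * ∑' k : ℕ, (1 / (k.factorial : ℝ)) * ((T * k + n - 1).choose n) * (K / T) ^ k := by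
  apply taylorCoeff_eq_of_hasFPowerSeriesAt (hasFPowerSeriesAt_ofScalars_of_hasSum
    (r := (|α| + 1)⁻¹) (by positivity) fun x hx => ?_) n
  have hαx : |α * x| < 1 := by
    rw [abs_mul]
    calc |α| * |x| ≤ (|α| + 1) * |x| := by gcongr; linarith
      _ < (|α| + 1) * (|α| + 1)⁻¹ := by gcongr
      _ = 1 := mul_inv_cancel₀ (by positivity)
  unfold majorantFun
  convert hasSum_exp_mul_inv_one_sub_pow T (K / T) hαx using 1
  ext m
  rw [mul_pow]
  ring

theorem majorant_fun_coeff_formula (T : ℕ) (hT : 1 ≤ T) (K α : ℝ)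
    (hK : 0 < K) (hα : 0 < α) (n : ℕ) :
    taylorCoeff (majorantFun K α T) n =
      α ^ n * ∑' k : ℕ, (1 / (k.factorial : ℝ)) * ((T * k + n - 1).choose n) * (K / T) ^ k :=
  majorant_fun_coeff_formula_general T K α n
end

section
/- Let q ≥ 1 be an integer and n an integer with n ≥ 3q/2. Then (2π)^{(q−1)/2} · q^{1/2} / n ≤ q^n · Γ(n/q+1)^q / n! ≤ (2π)^{(q−1)/2} · q^{1/2−q} · (n+1)^{rising(q−1)}. -/
/-- The rising factorial `x (x+1) ⋯ (x+k-1)`, with `x^{rising 0} = 1`. -/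
noncomputable def risingFactorialR (x : ℝ) (k : ℕ) : ℝ :=
  ∏ i ∈ Finset.range k, (x + i)

/-!
With `T = n/q + 1` and `t_k = (n + 1 + k)/q`, Gauss's multiplication formula at `s = n + 1` gives
`q^n Γ(T)^q / n! = (2π)^((q-1)/2) q^(-1/2) ∏_{k < q-1} Γ(T)/Γ(t_k)`. When `3q ≤ 2n` each `t_k`
lies in `[3/2, T]` with `T - t_k ≤ 1`, and each ratio lies in `[1, t_k]`: the lower bound because
`Γ` is convex with `Γ(3/2) < 1 = Γ(2) ≤ Γ(T)`, the upper one by log-convexity,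
`Γ(t + δ) ≤ t^δ Γ(t)` for `0 ≤ δ ≤ 1`.

The multiplication formula follows from Bohr–Mollerup; its constant `∏_{k=1}^{q} Γ(k/q)` is
computed by pairing `k/q` with `1 - k/q` in the reflection formula and using
`∏_{k=1}^{q-1} 2 sin(πk/q) = q`, the norm of `∏ (1 - ζ^k) = q` for a primitive `q`-th root `ζ`.
-/

open Real Finset

namespace Real

theorem prod_two_sin_pi_mul_succ_div (m : ℕ) :
    ∏ k ∈ range m, 2 * sin (π * (k + 1) / (m + 1)) = m + 1 := by
  have hμ := Complex.isPrimitiveRoot_exp (m + 1) m.succ_ne_zero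
  have h := congrArg (‖·‖) hμ.prod_one_sub_pow_eq_order
  rw [norm_prod, show ((m : ℂ) + 1) = ((m + 1 : ℝ) : ℂ) by push_cast; rfl, Complex.norm_real,
    Real.norm_of_nonneg (by positivity)] at h
  refine (prod_congr rfl fun k hk => ?_).trans h
  have hk : (k : ℝ) + 1 ≤ m := by exact_mod_cast mem_range.mp hk
  have harg : ((k + 1 : ℕ) : ℂ) * (2 * π * Complex.I / ((m + 1 : ℕ) : ℂ))
      = Complex.I * ((2 * π * (k + 1) / (m + 1) : ℝ) : ℂ) := by push_cast; ring
  rw [← Complex.exp_nat_mul, norm_sub_rev, harg, Complex.norm_exp_I_mul_ofReal_sub_one,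
    Real.norm_of_nonneg]
  · ring_nf
  · refine mul_nonneg zero_le_two (sin_nonneg_of_nonneg_of_le_pi (by positivity) ?_)
    rw [div_div, div_le_iff₀ (by positivity)]
    nlinarith [pi_pos]

theorem prod_Gamma_succ_div_sq {q : ℕ} (hq : 0 < q) :
    (∏ k ∈ range q, Gamma ((k + 1) / q)) ^ 2 = (2 * π) ^ (q - 1) / q := by
  obtain ⟨m, rfl⟩ := Nat.exists_eq_add_of_lt hq
  rw [zero_add, Nat.add_sub_cancel, prod_range_succ, Nat.cast_add_one,
    div_self (by positivity), Gamma_one, mul_one]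
  have hreflect : ∏ k ∈ range m, Gamma ((k + 1) / (m + 1))
      = ∏ k ∈ range m, Gamma (1 - (k + 1) / (m + 1)) := by
    rw [← prod_range_reflect]
    refine prod_congr rfl fun k hk => ?_
    rw [Nat.sub_sub, Nat.cast_sub (by have := mem_range.mp hk; omega)]
    push_cast
    field_simp
    ring_nf
  calc (∏ k ∈ range m, Gamma ((k + 1) / (m + 1))) ^ 2
      = ∏ k ∈ range m, 2 * π / (2 * sin (π * (k + 1) / (m + 1))) := by
        rw [sq]
        nth_rw 2 [hreflect]
        rw [← prod_mul_distrib]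
        refine prod_congr rfl fun k _ => ?_
        rw [Gamma_mul_Gamma_one_sub, mul_div_mul_left _ _ two_ne_zero, mul_div_assoc]
    _ = (2 * π) ^ m / (m + 1) := by
        rw [prod_div_distrib, prod_const, card_range, prod_two_sin_pi_mul_succ_div]

theorem prod_Gamma_succ_div {q : ℕ} (hq : 0 < q) :
    ∏ k ∈ range q, Gamma ((k + 1) / q)
      = (2 * π) ^ (((q : ℝ) - 1) / 2) * (q : ℝ) ^ (-(1 : ℝ) / 2) := by
  have hq' : (0 : ℝ) < q := by exact_mod_cast hq
  refine (pow_left_inj₀ (prod_nonneg fun k _ => (Gamma_pos_of_pos (by positivity)).le)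
    (by positivity) two_ne_zero).1 ?_
  rw [prod_Gamma_succ_div_sq hq, mul_pow ((2 * π) ^ (((q : ℝ) - 1) / 2)),
    ← rpow_mul_natCast (by positivity), ← rpow_mul_natCast hq'.le, ← rpow_natCast, Nat.cast_sub hq]
  push_cast
  rw [div_mul_cancel₀ _ two_ne_zero, div_mul_cancel₀ _ two_ne_zero, rpow_neg_one, div_eq_mul_inv]

theorem convexOn_log_Gamma_add_div {q c : ℝ} (hq : 0 < q) (hc : 0 ≤ c) :
    ConvexOn ℝ (Set.Ioi 0) fun s => log (Gamma ((s + c) / q)) := by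
  refine ⟨convex_Ioi 0, fun x hx y hy a b ha hb hab => ?_⟩
  have hx : (0 : ℝ) < x := hx
  have hy : (0 : ℝ) < y := hy
  have hcomb : (a • x + b • y + c) / q = a • ((x + c) / q) + b • ((y + c) / q) := by
    simp only [smul_eq_mul]
    field_simp
    linear_combination (-c) * hab
  simpa only [hcomb, Function.comp_apply] using convexOn_log_Gamma.2 (x := (x + c) / q)
    (y := (y + c) / q) (Set.mem_Ioi.2 (by positivity)) (Set.mem_Ioi.2 (by positivity)) ha hb hab

theorem prod_Gamma_add_one_add_div {q : ℕ} (hq : 0 < q) {s : ℝ} (hs : 0 < s) :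
    ∏ k ∈ range q, Gamma ((s + 1 + k) / q) = s / q * ∏ k ∈ range q, Gamma ((s + k) / q) := by
  set g : ℕ → ℝ := fun k => Gamma ((s + k) / q)
  have hg0 : g 0 ≠ 0 := (Gamma_pos_of_pos (by positivity)).ne'
  have hgq : g q = s / q * g 0 := by
    simp only [g, Nat.cast_zero, add_zero]
    rw [← Gamma_add_one (by positivity), add_div, div_self (by positivity)]
  refine mul_right_cancel₀ hg0 ?_
  calc (∏ k ∈ range q, Gamma ((s + 1 + k) / q)) * g 0
      = (∏ k ∈ range q, g (k + 1)) * g 0 := by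
        congr 1
        refine prod_congr rfl fun k _ => ?_
        simp only [g, Nat.cast_succ]
        ring_nf
    _ = ∏ k ∈ range (q + 1), g k := (prod_range_succ' g q).symm
    _ = s / q * (∏ k ∈ range q, g k) * g 0 := by
        rw [prod_range_succ, hgq]
        ring

/-- The normalisation makes `gaussMultGamma q 1 = 1`, so that Bohr–Mollerup identifies it
with `Gamma`. -/
noncomputable def gaussMultGamma (q : ℕ) (s : ℝ) : ℝ :=
  (q : ℝ) ^ (s - 1) * (∏ k ∈ range q, Gamma ((s + k) / q))
    / ∏ k ∈ range q, Gamma ((k + 1) / q)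

section gaussMultGamma

variable {q : ℕ} (hq : 0 < q)
include hq

theorem gaussMultGamma_pos {s : ℝ} (hs : 0 < s) : 0 < gaussMultGamma q s := by
  have hq' : (0 : ℝ) < q := by exact_mod_cast hq
  unfold gaussMultGamma
  refine div_pos (mul_pos (by positivity) (prod_pos fun k _ => Gamma_pos_of_pos ?_))
    (prod_pos fun k _ => Gamma_pos_of_pos (by positivity))
  positivity

theorem gaussMultGamma_add_one {s : ℝ} (hs : 0 < s) :
    gaussMultGamma q (s + 1) = s * gaussMultGamma q s := by
  have hq' : (q : ℝ) ≠ 0 := by positivity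
  rw [gaussMultGamma, gaussMultGamma, prod_Gamma_add_one_add_div hq hs, add_sub_cancel_right,
    rpow_sub_one hq']
  field_simp

theorem gaussMultGamma_one : gaussMultGamma q 1 = 1 := by
  rw [gaussMultGamma, sub_self, rpow_zero, one_mul]
  simp_rw [add_comm (1 : ℝ)]
  exact div_self (prod_pos fun k _ => Gamma_pos_of_pos (by positivity)).ne'

theorem convexOn_log_gaussMultGamma : ConvexOn ℝ (Set.Ioi 0) (log ∘ gaussMultGamma q) := by
  have hq' : (0 : ℝ) < q := by exact_mod_cast hq
  have hsum : ConvexOn ℝ (Set.Ioi 0) fun s => ∑ k ∈ range q, log (Gamma ((s + k) / q)) := by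
    refine ⟨convex_Ioi 0, fun x hx y hy a b ha hb hab => ?_⟩
    simp only [smul_eq_mul, mul_sum, ← sum_add_distrib]
    exact sum_le_sum fun k _ =>
      (convexOn_log_Gamma_add_div hq' k.cast_nonneg).2 hx hy ha hb hab
  have hlin : ConvexOn ℝ (Set.Ioi 0) fun s : ℝ => s * log q :=
    ⟨convex_Ioi 0, fun x _ y _ a b _ _ _ => le_of_eq (by simp only [smul_eq_mul]; ring)⟩
  refine ((hsum.add hlin).add_const (-log q - log (∏ k ∈ range q, Gamma ((k + 1) / q)))).congr
    fun s (hs : 0 < s) => ?_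
  have hΓ : ∀ k ∈ range q, Gamma ((s + k) / q) ≠ 0 :=
    fun k _ => (Gamma_pos_of_pos (by positivity)).ne'
  simp only [Function.comp_apply, gaussMultGamma, Pi.add_apply]
  rw [log_div (mul_ne_zero (by positivity) (prod_ne_zero_iff.2 hΓ))
      (prod_pos fun k _ => Gamma_pos_of_pos (by positivity)).ne',
    log_mul (by positivity) (prod_ne_zero_iff.2 hΓ), log_rpow hq', log_prod hΓ]
  ring

end gaussMultGamma

/-- Gauss's multiplication formula for the Gamma function, for positive real arguments. -/
theorem prod_Gamma_add_div {q : ℕ} (hq : 0 < q) {s : ℝ} (hs : 0 < s) :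
    ∏ k ∈ range q, Gamma ((s + k) / q)
      = (2 * π) ^ (((q : ℝ) - 1) / 2) * (q : ℝ) ^ ((1 : ℝ) / 2 - s) * Gamma s := by
  have hq' : (0 : ℝ) < q := by exact_mod_cast hq
  have h := eq_Gamma_of_log_convex (convexOn_log_gaussMultGamma hq)
    (gaussMultGamma_add_one hq) (gaussMultGamma_pos hq) (gaussMultGamma_one hq) hs
  rw [gaussMultGamma, prod_Gamma_succ_div hq, div_eq_iff (by positivity)] at h
  rw [show (1 : ℝ) / 2 - s = -(1 : ℝ) / 2 - (s - 1) by ring, rpow_sub hq',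
    mul_div_assoc', div_mul_eq_mul_div, eq_div_iff (by positivity)]
  linear_combination h

theorem Gamma_le_Gamma_of_three_halves_le {t T : ℝ} (ht : 3 / 2 ≤ t) (htT : t ≤ T)
    (hT : 2 ≤ T) : Gamma t ≤ Gamma T := by
  have h₂ : Gamma 2 ≤ Gamma T :=
    Gamma_strictMonoOn_Ici.monotoneOn (Set.mem_Ici.2 le_rfl) (Set.mem_Ici.2 hT) hT
  have hmax : max (Gamma (3 / 2)) (Gamma T) = Gamma T := by
    rw [Gamma_two] at h₂
    exact max_eq_right (Gamma_three_div_two_lt_one.le.trans h₂)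
  rw [← hmax]
  exact convexOn_Gamma.le_on_segment (Set.mem_Ioi.2 (by norm_num))
    (Set.mem_Ioi.2 (by linarith)) (by rw [segment_eq_Icc (by linarith)]; exact ⟨ht, htT⟩)

theorem Gamma_add_le_rpow_mul_Gamma {t δ : ℝ} (ht : 0 < t) (hδ₀ : 0 ≤ δ) (hδ₁ : δ ≤ 1) :
    Gamma (t + δ) ≤ t ^ δ * Gamma t := by
  rcases hδ₀.eq_or_lt with rfl | hδ₀
  · simp
  rcases hδ₁.lt_or_eq with hδ₁ | rfl
  swap
  · rw [Gamma_add_one ht.ne', rpow_one]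
  have hΓ : 0 < Gamma t := Gamma_pos_of_pos ht
  calc Gamma (t + δ) = Gamma ((1 - δ) * t + δ * (t + 1)) := by ring_nf
    _ ≤ Gamma t ^ (1 - δ) * Gamma (t + 1) ^ δ :=
      Gamma_mul_add_mul_le_rpow_Gamma_mul_rpow_Gamma ht (by linarith) (by linarith) hδ₀ (by ring)
    _ = t ^ δ * Gamma t := by
      rw [Gamma_add_one ht.ne', mul_rpow ht.le hΓ.le, mul_left_comm, ← rpow_add hΓ,
        sub_add_cancel, rpow_one]

theorem Gamma_div_Gamma_mem_Icc {t T : ℝ} (ht : 3 / 2 ≤ t) (htT : t ≤ T) (hTt : T ≤ t + 1)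
    (hT : 2 ≤ T) : Gamma T / Gamma t ∈ Set.Icc 1 t := by
  have ht₀ : 0 < t := by linarith
  have hΓ : 0 < Gamma t := Gamma_pos_of_pos ht₀
  refine ⟨(one_le_div hΓ).2 (Gamma_le_Gamma_of_three_halves_le ht htT hT),
    (div_le_iff₀ hΓ).2 ?_⟩
  calc Gamma T = Gamma (t + (T - t)) := by rw [add_sub_cancel]
    _ ≤ t ^ (T - t) * Gamma t := Gamma_add_le_rpow_mul_Gamma ht₀ (by linarith) (by linarith)
    _ ≤ t * Gamma t := by gcongr; exact rpow_le_self_of_one_le (by linarith) (by linarith)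

theorem pow_mul_Gamma_pow_div_factorial {q : ℕ} (hq : 0 < q) (n : ℕ) :
    (q : ℝ) ^ n * Gamma (n / q + 1) ^ q / n.factorial
      = (2 * π) ^ (((q : ℝ) - 1) / 2) * (q : ℝ) ^ (-(1 : ℝ) / 2)
        * ∏ k ∈ range (q - 1), Gamma (n / q + 1) / Gamma ((n + 1 + k) / q) := by
  have hq' : (0 : ℝ) < q := by exact_mod_cast hq
  have hT : 0 < Gamma (n / q + 1) := Gamma_pos_of_pos (by positivity)
  have hgauss := prod_Gamma_add_div hq (s := n + 1) (by positivity)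
  obtain ⟨m, rfl⟩ := Nat.exists_eq_add_of_lt hq
  rw [zero_add] at *
  rw [prod_range_succ, Gamma_nat_eq_factorial,
    show ((n : ℝ) + 1 + m) / ((m + 1 : ℕ) : ℝ) = n / ((m + 1 : ℕ) : ℝ) + 1 by
      field_simp; push_cast; ring,
    show (1 : ℝ) / 2 - (n + 1) = -(1 : ℝ) / 2 - n by ring, rpow_sub_natCast hq'.ne'] at hgauss
  rw [Nat.add_sub_cancel, prod_div_distrib, prod_const, card_range,
    eq_div_of_mul_eq hT.ne' hgauss]
  field_simp
  ring

end Real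

theorem prod_add_div_eq_risingFactorialR_div_pow (x c : ℝ) (m : ℕ) :
    ∏ k ∈ range m, (x + k) / c = risingFactorialR x m / c ^ m := by
  rw [risingFactorialR, prod_div_distrib, prod_const, card_range]

theorem Gamma_div_Gamma_add_succ_div_mem_Icc {q n k : ℕ} (hn : 3 * q ≤ 2 * n)
    (hk : k + 1 < q) :
    Gamma (n / q + 1) / Gamma ((n + 1 + k) / q) ∈ Set.Icc 1 (((n : ℝ) + 1 + k) / q) := by
  have hq : (0 : ℝ) < q := by exact_mod_cast (show 0 < q by omega)
  have hn' : 3 * (q : ℝ) ≤ 2 * n := by exact_mod_cast hn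
  have hk' : (k : ℝ) + 1 < q := by exact_mod_cast hk
  apply Gamma_div_Gamma_mem_Icc
  · rw [le_div_iff₀ hq]; linarith
  · rw [div_add_one hq.ne', div_le_div_iff_of_pos_right hq]; linarith
  · gcongr; linarith
  · rw [← sub_le_iff_le_add, le_div_iff₀ hq]; linarith

theorem gamma_multiplication_estimate (q : ℕ) (hq : 1 ≤ q) (n : ℕ) (hn : 3 * q ≤ 2 * n) :
    (2 * Real.pi) ^ (((q : ℝ) - 1) / 2) * (q : ℝ) ^ ((1 : ℝ) / 2) / n ≤
      (q : ℝ) ^ n * Real.Gamma ((n : ℝ) / q + 1) ^ q / n.factorial ∧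
    (q : ℝ) ^ n * Real.Gamma ((n : ℝ) / q + 1) ^ q / n.factorial ≤
      (2 * Real.pi) ^ (((q : ℝ) - 1) / 2) * (q : ℝ) ^ ((1 : ℝ) / 2 - q) *
        risingFactorialR ((n : ℝ) + 1) (q - 1) := by
  have hq' : (0 : ℝ) < q := by exact_mod_cast hq
  have hqn : (q : ℝ) ≤ n := by exact_mod_cast (show q ≤ n by omega)
  have hbounds := fun k (hk : k ∈ range (q - 1)) =>
    Gamma_div_Gamma_add_succ_div_mem_Icc hn (k := k) (by have := mem_range.1 hk; omega)
  rw [pow_mul_Gamma_pow_div_factorial hq]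
  set C := (2 * π) ^ (((q : ℝ) - 1) / 2) * (q : ℝ) ^ (-(1 : ℝ) / 2)
  set P := ∏ k ∈ range (q - 1), Gamma (n / q + 1) / Gamma ((n + 1 + k) / q)
  have hP₁ : 1 ≤ P := one_le_prod fun k hk => (hbounds k hk).1
  have hP₂ : P ≤ risingFactorialR (n + 1) (q - 1) / q ^ (q - 1) := by
    rw [← prod_add_div_eq_risingFactorialR_div_pow]
    exact prod_le_prod (fun k hk => zero_le_one.trans (hbounds k hk).1)
      fun k hk => (hbounds k hk).2
  constructor
  · calc (2 * π) ^ (((q : ℝ) - 1) / 2) * (q : ℝ) ^ ((1 : ℝ) / 2) / n = C * (q / n) := by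
          rw [show (1 : ℝ) / 2 = -(1 : ℝ) / 2 + 1 by norm_num, rpow_add_one hq'.ne']
          ring
      _ ≤ C * 1 := by gcongr; exact div_le_one_of_le₀ hqn (by positivity)
      _ ≤ C * P := by gcongr
  · calc C * P ≤ C * (risingFactorialR (n + 1) (q - 1) / q ^ (q - 1)) := by gcongr
      _ = _ := by
        rw [show (1 : ℝ) / 2 - q = -(1 : ℝ) / 2 - (q - 1 : ℕ) by
            push_cast [Nat.cast_sub hq]; ring, rpow_sub_natCast hq'.ne']
        ring
end

section
/- Let q > 0 be a real number with log q > γ, where γ is the Euler–Mascheroni constant. Then the function x ↦ q^x · Γ(x+1) is monotonically increasing on [0, ∞). In particular this holds for every integer q ≥ 2. -/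
/-!
The logarithm `x * log q + log Γ(x + 1)` of the function is convex (log-convexity of `Γ`), and its
derivative at `0` is `log q + Γ'(1) = log q - γ > 0`. A convex function on `[0, ∞)` whose right
derivative at `0` is nonnegative is monotone. For integers `q ≥ 2` use `γ < 2/3 < log 2`.
-/

open Real Set

theorem ConvexOn.monotoneOn_Ici_of_hasDerivWithinAt_nonneg {f : ℝ → ℝ} {a f' : ℝ}
    (hf : ConvexOn ℝ (Ici a) f) (hd : HasDerivWithinAt f f' (Ioi a) a) (hf' : 0 ≤ f') :
    MonotoneOn f (Ici a) := by
  intro x hx y hy hxy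
  obtain rfl | hlt := hxy.eq_or_lt
  · exact le_rfl
  rw [← slope_nonneg_iff_of_le hxy]
  obtain rfl | hax := (mem_Ici.mp hx).eq_or_lt
  · exact hf'.trans (hf.le_slope_of_hasDerivWithinAt_Ioi hx hy hlt hd)
  calc 0 ≤ f' := hf'
    _ ≤ slope f a x := hf.le_slope_of_hasDerivWithinAt_Ioi self_mem_Ici hx hax hd
    _ = slope f x a := slope_comm f a x
    _ ≤ slope f x y := hf.slope_mono hx ⟨self_mem_Ici, hax.ne⟩ ⟨hy, hlt.ne'⟩ (hax.trans hlt).le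

theorem convexOn_log_Gamma_add_one : ConvexOn ℝ (Ioi (-1)) fun x => log (Gamma (x + 1)) := by
  have h := convexOn_log_Gamma.translate_right 1
  have hs : (fun z : ℝ => 1 + z) ⁻¹' Ioi 0 = Ioi (-1) := by ext x; simp [neg_lt_iff_pos_add']
  rw [hs] at h
  simpa only [Function.comp_def, add_comm] using h

theorem hasDerivAt_log_Gamma_add_one_zero :
    HasDerivAt (fun x => log (Gamma (x + 1))) (-eulerMascheroniConstant) 0 := by
  have hΓ : HasDerivAt (fun x => Gamma (x + 1)) (-eulerMascheroniConstant) 0 :=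
    HasDerivAt.comp_add_const 0 1 (by simpa using hasDerivAt_Gamma_one)
  simpa using hΓ.log (by simp)

theorem rpow_mul_Gamma_add_one_eq_exp {q x : ℝ} (hq : 0 < q) (hx : -1 < x) :
    q ^ x * Gamma (x + 1) = exp (log q * x + log (Gamma (x + 1))) := by
  rw [exp_add, exp_log (Gamma_pos_of_pos (by linarith)), rpow_def_of_pos hq]

theorem eulerMascheroniConstant_lt_log_two : eulerMascheroniConstant < log 2 :=
  eulerMascheroniConstant_lt_two_thirds.trans (by linarith [log_two_gt_d9])

theorem monotoneOn_rpow_mul_Gamma_add_one {q : ℝ} (hq : 0 < q)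
    (hγ : eulerMascheroniConstant < log q) :
    MonotoneOn (fun x : ℝ => q ^ x * Gamma (x + 1)) (Ici 0) := by
  set g : ℝ → ℝ := fun x => log q * x + log (Gamma (x + 1))
  have hconv : ConvexOn ℝ (Ici 0) g :=
    ((LinearMap.mulLeft ℝ (log q)).convexOn (convex_Ici 0)).add
      (convexOn_log_Gamma_add_one.subset (Ici_subset_Ioi.2 (by norm_num)) (convex_Ici 0))
  have hderiv : HasDerivAt g (log q - eulerMascheroniConstant) 0 := by
    have h := ((hasDerivAt_id' 0).const_mul (log q)).add hasDerivAt_log_Gamma_add_one_zero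
    rwa [mul_one, ← sub_eq_add_neg] at h
  have hg : MonotoneOn g (Ici 0) :=
    hconv.monotoneOn_Ici_of_hasDerivWithinAt_nonneg hderiv.hasDerivWithinAt (by linarith)
  refine (exp_monotone.comp_monotoneOn hg).congr fun x hx => ?_
  exact (rpow_mul_Gamma_add_one_eq_exp hq (by linarith [mem_Ici.mp hx])).symm

theorem qpow_mul_gamma_monotone :
    (∀ q : ℝ, 0 < q → Real.eulerMascheroniConstant < Real.log q →
      MonotoneOn (fun x : ℝ => q ^ x * Real.Gamma (x + 1)) (Set.Ici 0)) ∧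
    (∀ q : ℕ, 2 ≤ q →
      MonotoneOn (fun x : ℝ => (q : ℝ) ^ x * Real.Gamma (x + 1)) (Set.Ici 0)) := by
  refine ⟨fun q hq hγ => monotoneOn_rpow_mul_Gamma_add_one hq hγ, fun q hq => ?_⟩
  have hq2 : (2 : ℝ) ≤ q := by exact_mod_cast hq
  exact monotoneOn_rpow_mul_Gamma_add_one (by linarith)
    (eulerMascheroniConstant_lt_log_two.trans_le (log_le_log two_pos hq2))
end

section
/- Let u ∈ ℂ[[z]] and v ∈ ℝ[[z]] with u ⪯ v, let z ∈ ℂ and let t be a real number with |z| < t such that Σ_{k≥0} v_k t^k converges with sum v(t). Then for every n ∈ ℕ, the tail Σ_{k≥n} u_k z^k converges absolutely and |Σ_{k≥n} u_k z^k| ≤ v(t) · (|z|/t)^n / (1 − |z|/t). -/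
/-! Each coefficient of the majorant satisfies the saddle-point bound `v_k ≤ v(t) / t^k`, so the
terms of `∑ u_k z^k` are dominated by `v(t) (|z|/t)^k`; the tail from `n` on is then bounded by
the corresponding geometric tail `v(t) (|z|/t)^n / (1 - |z|/t)`. -/

open PowerSeries

theorem summable_norm_and_norm_tsum_le_of_norm_le_geometric {E : Type*}
    [SeminormedAddCommGroup E] {f : ℕ → E} {C r : ℝ} (hr₀ : 0 ≤ r) (hr₁ : r < 1)
    (hf : ∀ k, ‖f k‖ ≤ C * r ^ k) :
    Summable (fun k => ‖f k‖) ∧ ‖∑' k, f k‖ ≤ C / (1 - r) := by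
  have hgeom : HasSum (fun k => C * r ^ k) (C / (1 - r)) := by
    simpa [div_eq_mul_inv] using (hasSum_geometric_of_lt_one hr₀ hr₁).mul_left C
  exact ⟨.of_nonneg_of_le (fun k => norm_nonneg _) hf hgeom.summable,
    tsum_of_norm_bounded hgeom hf⟩

theorem Majorizes.norm_coeff_mul_pow_le {u : PowerSeries ℂ} {v : PowerSeries ℝ}
    (h : Majorizes u v) (z : ℂ) {t : ℝ} (ht : 0 < t)
    (hv : Summable fun k : ℕ => coeff k v * t ^ k) (k : ℕ) :
    ‖coeff k u * z ^ k‖ ≤ (∑' j : ℕ, coeff j v * t ^ j) * (‖z‖ / t) ^ k := by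
  have hvt : coeff k v * t ^ k ≤ ∑' j : ℕ, coeff j v * t ^ j :=
    hv.le_tsum k fun j _ => mul_nonneg (h j).1 (pow_nonneg ht.le j)
  calc ‖coeff k u * z ^ k‖ = ‖coeff k u‖ * ‖z‖ ^ k := by rw [norm_mul, norm_pow]
    _ ≤ coeff k v * ‖z‖ ^ k := by gcongr; exact (h k).2
    _ = coeff k v * t ^ k * (‖z‖ / t) ^ k := by rw [div_pow]; field_simp
    _ ≤ (∑' j : ℕ, coeff j v * t ^ j) * (‖z‖ / t) ^ k := by gcongr

theorem majorant_saddle_tail_bound (u : PowerSeries ℂ) (v : PowerSeries ℝ)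
    (h : Majorizes u v) (z : ℂ) (t : ℝ) (hzt : ‖z‖ < t)
    (hconv : Summable fun k : ℕ => PowerSeries.coeff k v * t ^ k) :
    ∀ n : ℕ,
      Summable (fun k : ℕ => ‖PowerSeries.coeff (n + k) u * z ^ (n + k)‖) ∧
      ‖∑' k : ℕ, PowerSeries.coeff (n + k) u * z ^ (n + k)‖ ≤
        (∑' k : ℕ, PowerSeries.coeff k v * t ^ k) * (‖z‖ / t) ^ n /
          (1 - ‖z‖ / t) := by
  intro n
  have ht : 0 < t := (norm_nonneg z).trans_lt hzt
  refine summable_norm_and_norm_tsum_le_of_norm_le_geometric (by positivity)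
    ((div_lt_one ht).2 hzt) fun k => ?_
  simpa only [pow_add, mul_assoc] using h.norm_coeff_mul_pow_le z ht hconv (n + k)
end
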